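/- arXiv:1905.03308 — 9 statements merged into one kernel-verified Lean document; each statement's English description precedes it below -/
import Mathlib

section
/- Let (X, 𝓘) be a matroid of rank K, let f : 𝓘 → ℝ be a polymatroid function on 𝓘 with f({j}) > 0 for some j with {j} ∈ 𝓘, and let b(f) be the partial curvature of f. Suppose g : 2^X → ℝ is a polymatroid set function agreeing with f on 𝓘 such that g(X) − g(X∖{a}) ≥ (1 − b(f)) · g({a}) for every a ∈ X, with equality for some a ∈ X. Then every greedy solution G_K and optimal solution O satisfy (1 + b(f)) · f(G_K) ≥ f(O); and if moreover (X, 𝓘) is the uniform matroid of rank K and b(f) > 0, then f(G_K) ≥ (1/b(f)) · (1 − (1 − b(f)/K)^K) · f(O). -/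
open Finset

variable {α : Type*} [DecidableEq α] [Fintype α]

/-- Monotone set function. -/
def SetMonotone (f : Finset α → ℝ) : Prop :=
  ∀ ⦃A B : Finset α⦄, A ⊆ B → f A ≤ f B

/-- Submodular set function. -/
def SetSubmodular (f : Finset α → ℝ) : Prop :=
  ∀ ⦃A B : Finset α⦄, A ⊆ B → ∀ j ∉ B, f (insert j A) - f A ≥ f (insert j B) - f B

/-- Polymatroid set function: monotone, submodular, and `f ∅ = 0`. -/
def PolymatroidFn (f : Finset α → ℝ) : Prop :=
  SetMonotone f ∧ SetSubmodular f ∧ f ∅ = 0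

/-- Hereditary collection of sets. -/
def Hereditary (I : Finset α → Prop) : Prop :=
  ∀ ⦃B⦄, I B → ∀ ⦃A⦄, A ⊆ B → I A

/-- Independence system: nonempty hereditary collection. -/
def IndepSystem (I : Finset α → Prop) : Prop :=
  (∃ S, I S) ∧ Hereditary I

/-- Augmentation property. -/
def Augmentation (I : Finset α → Prop) : Prop :=
  ∀ ⦃A B⦄, I A → I B → A.card < B.card → ∃ j ∈ B, j ∉ A ∧ I (insert j A)

/-- Matroid: independence system with augmentation. -/
def IsMatroid (I : Finset α → Prop) : Prop :=
  IndepSystem I ∧ Augmentation I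

/-- One step of the greedy algorithm: add a feasible element of largest gain. -/
def GreedyStep (I : Finset α → Prop) (f : Finset α → ℝ) (S S' : Finset α) : Prop :=
  ∃ a ∉ S, I (insert a S) ∧ S' = insert a S ∧
    ∀ b ∉ S, I (insert b S) → f (insert b S) ≤ f (insert a S)

/-- Greedy solution: obtained from `∅` by greedy steps, and no further feasible addition. -/
def IsGreedy (I : Finset α → Prop) (f : Finset α → ℝ) (G : Finset α) : Prop :=
  Relation.ReflTransGen (GreedyStep I f) ∅ G ∧ ∀ a ∉ G, ¬ I (insert a G)

/-- Optimal solution: member of the constraint maximizing `f`. -/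
def IsOptimal (I : Finset α → Prop) (f : Finset α → ℝ) (O : Finset α) : Prop :=
  I O ∧ ∀ S, I S → f S ≤ f O

/-- `B` is a basis of `S`: a maximal independent subset of `S`. -/
def IsBasisOf (I : Finset α → Prop) (S B : Finset α) : Prop :=
  B ⊆ S ∧ I B ∧ ∀ ⦃B' : Finset α⦄, I B' → B ⊆ B' → B' ⊆ S → B' = B

/-- Lower rank of `S`: minimum cardinality of a basis of `S`. -/
noncomputable def lr (I : Finset α → Prop) (S : Finset α) : ℕ :=
  sInf {n : ℕ | ∃ B, IsBasisOf I S B ∧ B.card = n}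

/-- Upper rank of `S`: maximum cardinality of a basis of `S`. -/
noncomputable def ur (I : Finset α → Prop) (S : Finset α) : ℕ :=
  sSup {n : ℕ | ∃ B, IsBasisOf I S B ∧ B.card = n}

/-- Rank quotient `q(X, 𝓘)`. -/
noncomputable def rankQuotient (I : Finset α → Prop) : ℝ :=
  sInf {x : ℝ | ∃ S : Finset α, 0 < ur I S ∧ x = (lr I S : ℝ) / (ur I S : ℝ)}

/-- Total curvature `c(f)`. -/
noncomputable def totalCurvature (f : Finset α → ℝ) : ℝ :=
  sSup {x : ℝ | ∃ j : α, f {j} ≠ f ∅ ∧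
    x = 1 - (f Finset.univ - f (Finset.univ.erase j)) / (f {j} - f ∅)}

/-- Partial curvature `b(f)`, over pairs `(j, A)` with `j ∈ A ∈ 𝓘`. -/
noncomputable def partialCurvature (I : Finset α → Prop) (f : Finset α → ℝ) : ℝ :=
  sSup {x : ℝ | ∃ (j : α) (A : Finset α), I A ∧ j ∈ A ∧ f {j} ≠ f ∅ ∧
    x = 1 - (f A - f (A.erase j)) / (f {j} - f ∅)}

/-- Total `k`-batch curvature `c_k`. -/
noncomputable def batchCurvature (f : Finset α → ℝ) (k : ℕ) : ℝ :=
  sSup {x : ℝ | ∃ J : Finset α, J.card = k ∧ f J ≠ f ∅ ∧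
    x = 1 - (f Finset.univ - f (Finset.univ \ J)) / (f J - f ∅)}

/-- Polymatroid function defined on a collection `𝓘`. -/
def PolymatroidOn (I : Finset α → Prop) (f : Finset α → ℝ) : Prop :=
  f ∅ = 0 ∧ (∀ ⦃A B : Finset α⦄, A ⊆ B → I B → f A ≤ f B) ∧
    ∀ ⦃A B : Finset α⦄, A ⊆ B → ∀ j ∉ B, I (insert j B) →
      f (insert j A) - f A ≥ f (insert j B) - f B

/-- One step of the batched greedy algorithm: add a feasible batch of size `k`
of largest gain. -/
def BatchStep (I : Finset α → Prop) (f : Finset α → ℝ) (k : ℕ) (S S' : Finset α) : Prop :=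
  ∃ J : Finset α, Disjoint J S ∧ J.card = k ∧ I (S ∪ J) ∧ S' = S ∪ J ∧
    ∀ J' : Finset α, Disjoint J' S → J'.card = k → I (S ∪ J') → f (S ∪ J') ≤ f (S ∪ J)

/-- `k`-batch greedy solution: `l - 1` batches of size `k` followed by one batch of
size `m`. -/
def IsBatchGreedy (I : Finset α → Prop) (f : Finset α → ℝ) (k l m : ℕ)
    (S : Finset α) : Prop :=
  ∃ T : ℕ → Finset α, T 0 = ∅ ∧ (∀ t < l - 1, BatchStep I f k (T t) (T (t + 1))) ∧
    BatchStep I f m (T (l - 1)) S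

namespace GreedyAux

variable {α : Type*} [DecidableEq α] [Fintype α]

section poly

variable {g : Finset α → ℝ}

lemma marg_le_single (hg : PolymatroidFn g) {a : α} {B : Finset α} (ha : a ∉ B) :
    g (insert a B) - g B ≤ g {a} := by
  have := hg.2.1 (empty_subset B) a ha
  simpa [hg.2.2] using this

lemma univ_marg_le (hg : PolymatroidFn g) {a : α} {B : Finset α} (ha : a ∉ B) :
    g univ - g (univ.erase a) ≤ g (insert a B) - g B := by
  have hsub : B ⊆ univ.erase a := fun x hx => mem_erase.2 ⟨fun h => ha (h ▸ hx), mem_univ x⟩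
  have := hg.2.1 hsub a (notMem_erase a univ)
  rwa [insert_erase (mem_univ a)] at this

lemma g_nonneg (hg : PolymatroidFn g) (S : Finset α) : 0 ≤ g S := by
  have := hg.1 (empty_subset S); rw [hg.2.2] at this; exact this

lemma peel_upper (hg : PolymatroidFn g) (A B : Finset α) :
    g (A ∪ B) ≤ g A + ∑ x ∈ B \ A, (g (insert x A) - g A) := by
  classical
  induction B using Finset.induction_on with
  | empty => simp
  | @insert x B hx ih =>
    rw [union_insert]
    by_cases hxA : x ∈ A
    · rw [insert_eq_self.2 (mem_union_left B hxA), insert_sdiff_of_mem B hxA]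
      exact ih
    · rw [insert_sdiff_of_notMem B hxA,
        sum_insert (fun h => hx ((mem_sdiff.1 h).1))]
      have hxAB : x ∉ A ∪ B := by simp [hxA, hx]
      have hsub := hg.2.1 (subset_union_left (s₁ := A) (s₂ := B)) x hxAB
      linarith

lemma peel_lower (hg : PolymatroidFn g) (A B : Finset α) :
    g A + ∑ x ∈ B \ A, (g univ - g (univ.erase x)) ≤ g (A ∪ B) := by
  classical
  induction B using Finset.induction_on with
  | empty => simp
  | @insert x B hx ih =>
    rw [union_insert]
    by_cases hxA : x ∈ A
    · rw [insert_eq_self.2 (mem_union_left B hxA), insert_sdiff_of_mem B hxA]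
      exact ih
    · rw [insert_sdiff_of_notMem B hxA,
        sum_insert (fun h => hx ((mem_sdiff.1 h).1))]
      have hxAB : x ∉ A ∪ B := by simp [hxA, hx]
      have hsub := univ_marg_le hg hxAB
      linarith

end poly

end GreedyAux

namespace GrC

variable {α : Type*} [DecidableEq α] [Fintype α]

/-- greedy list from a start set -/
def Chain (I : Finset α → Prop) (f : Finset α → ℝ) : Finset α → List α → Prop
  | _, [] => True
  | S, a :: l => a ∉ S ∧ I (insert a S) ∧
      (∀ b ∉ S, I (insert b S) → f (insert b S) ≤ f (insert a S)) ∧ Chain I f (insert a S) l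

def endS (S : Finset α) (l : List α) : Finset α := l.foldl (fun s a => insert a s) S

@[simp] lemma endS_nil (S : Finset α) : endS S ([] : List α) = S := rfl

@[simp] lemma endS_cons (S : Finset α) (a : α) (l : List α) :
    endS S (a :: l) = endS (insert a S) l := rfl

variable {I : Finset α → Prop} {f : Finset α → ℝ}

lemma subset_endS (S : Finset α) (l : List α) : S ⊆ endS S l := by
  induction l generalizing S with
  | nil => simp
  | cons a l ih => exact fun x hx => ih (insert a S) (mem_insert_of_mem hx)

lemma Chain_append {S T : Finset α} {l : List α} (h : Chain I f S l) (hstep : GreedyStep I f (endS S l) T) :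
    ∃ a, Chain I f S (l ++ [a]) ∧ endS S (l ++ [a]) = T := by
  obtain ⟨a, ha, hIa, rfl, hmax⟩ := hstep
  refine ⟨a, ?_, ?_⟩
  · induction l generalizing S with
    | nil => exact ⟨ha, hIa, hmax, trivial⟩
    | cons b l ih => exact ⟨h.1, h.2.1, h.2.2.1, ih h.2.2.2 ha hIa hmax⟩
  · induction l generalizing S with
    | nil => rfl
    | cons b l ih => exact ih h.2.2.2 ha hIa hmax

lemma exists_Chain {G : Finset α} (h : Relation.ReflTransGen (GreedyStep I f) ∅ G) :
    ∃ l, Chain I f ∅ l ∧ endS ∅ l = G := by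
  induction h with
  | refl => exact ⟨[], trivial, rfl⟩
  | tail _ hstep ih =>
    obtain ⟨l, hl, hend⟩ := ih
    obtain ⟨a, h1, h2⟩ := Chain_append hl (hend ▸ hstep)
    exact ⟨l ++ [a], h1, h2⟩

end GrC

namespace GrC

variable {α : Type*} [DecidableEq α] [Fintype α]
variable {I : Finset α → Prop} {f : Finset α → ℝ}

lemma indep_endS {S : Finset α} {l : List α} (h : Chain I f S l) (hS : I S) :
    I (endS S l) := by
  induction l generalizing S with
  | nil => exact hS
  | cons a l ih => exact ih h.2.2.2 h.2.1

lemma card_endS {S : Finset α} {l : List α} (h : Chain I f S l) :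
    (endS S l).card = S.card + l.length := by
  induction l generalizing S with
  | nil => simp
  | cons a l ih =>
    rw [endS_cons, ih h.2.2.2, card_insert_of_notMem h.1, List.length_cons]
    omega

lemma g_le_endS {g : Finset α → ℝ} (hg : SetMonotone g) (S : Finset α) (l : List α) :
    g S ≤ g (endS S l) := hg (subset_endS S l)

end GrC

namespace P2

open GreedyAux GrC

noncomputable def Phi (b : ℝ) (n r : ℕ) : ℝ := 1 - (1 - b / (r : ℝ)) ^ n

variable {b : ℝ}

lemma base_mem (hb0 : 0 < b) (hb1 : b ≤ 1) {r : ℕ} (hr : 1 ≤ r) :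
    0 ≤ 1 - b / (r : ℝ) ∧ 1 - b / (r : ℝ) ≤ 1 := by
  have hr' : (1 : ℝ) ≤ (r : ℝ) := by exact_mod_cast hr
  have h1 : b / (r : ℝ) ≤ b / 1 := by
    apply div_le_div_of_nonneg_left hb0.le (by norm_num) hr'
  have h2 : 0 < b / (r : ℝ) := div_pos hb0 (by linarith)
  constructor <;> [skip; skip] <;> rw [div_one] at h1 <;> nlinarith

lemma Phi_nonneg (hb0 : 0 < b) (hb1 : b ≤ 1) {n r : ℕ} (hr : 1 ≤ r) : 0 ≤ Phi b n r := by
  obtain ⟨h0, h1⟩ := base_mem hb0 hb1 hr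
  have := pow_le_one₀ h0 h1 (n := n)
  simp only [Phi]; linarith

lemma Phi_zero (b : ℝ) (r : ℕ) : Phi b 0 r = 0 := by simp [Phi]

/-- Phi(n,r) ≤ n*b/r (Bernoulli), hence ≤ b when n ≤ r -/
lemma Phi_le_b (hb0 : 0 < b) (hb1 : b ≤ 1) {n r : ℕ} (hnr : n ≤ r) : Phi b n r ≤ b := by
  rcases Nat.eq_zero_or_pos r with rfl | hr
  · interval_cases n
    simp [Phi, hb0.le]
  have hrR : (0:ℝ) < (r:ℝ) := by exact_mod_cast hr
  have hber := one_add_mul_le_pow (a := -(b / (r:ℝ))) (by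
    have : b / (r:ℝ) ≤ b := by
      calc b / (r:ℝ) ≤ b / 1 := div_le_div_of_nonneg_left hb0.le (by norm_num) (by exact_mod_cast hr)
      _ = b := div_one b
    nlinarith) n
  have : 1 - n * (b / (r:ℝ)) ≤ (1 - b / (r:ℝ)) ^ n := by
    calc 1 - n * (b / (r:ℝ)) = 1 + n * (-(b / (r:ℝ))) := by ring
    _ ≤ (1 + -(b / (r:ℝ))) ^ n := hber
    _ = (1 - b / (r:ℝ)) ^ n := by ring_nf
  have hn : (n : ℝ) ≤ (r : ℝ) := by exact_mod_cast hnr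
  have : Phi b n r ≤ n * (b / (r:ℝ)) := by simp only [Phi]; linarith
  calc Phi b n r ≤ n * (b / (r:ℝ)) := this
  _ ≤ r * (b / (r:ℝ)) := by
      apply mul_le_mul_of_nonneg_right hn (le_of_lt (div_pos hb0 hrR))
  _ = b := by field_simp

/-- identity: Phi(n+1,r) = Phi(n,r) + (b/r)(1-Phi(n,r)) for r ≥ 1 -/
lemma Phi_succ (b : ℝ) {n r : ℕ} (hr : 1 ≤ r) :
    Phi b (n+1) r = Phi b n r + (b / (r:ℝ)) * (1 - Phi b n r) := by
  have hrR : (0:ℝ) < (r:ℝ) := by exact_mod_cast hr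
  simp only [Phi, pow_succ]
  field_simp
  ring

end P2

namespace P2
variable {b : ℝ}

lemma Qlem (hb0 : 0 < b) (hb1 : b ≤ 1) {r : ℕ} (hr : 2 ≤ r) :
    ∀ m : ℕ, m + 1 ≤ r →
      (1 - 1/(r:ℝ)) * (1 - b/((r:ℝ)-1))^m + (1-b)/(r:ℝ) ≤ (1 - b/(r:ℝ))^(m+1) := by
  have hrR : (2:ℝ) ≤ (r:ℝ) := by exact_mod_cast hr
  have hr0 : (0:ℝ) < (r:ℝ) := by linarith
  have hr1 : (0:ℝ) < (r:ℝ) - 1 := by linarith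
  set u : ℝ := 1 - b/(r:ℝ) with hu
  set v : ℝ := 1 - b/((r:ℝ)-1) with hv
  have hu0 : 0 ≤ u := by
    have h : b/(r:ℝ) ≤ 1 := by rw [div_le_one hr0]; linarith
    rw [hu]; linarith
  have hv0 : 0 ≤ v := by
    have h : b/((r:ℝ)-1) ≤ 1 := by rw [div_le_one hr1]; linarith
    rw [hv]; linarith
  intro m
  induction m with
  | zero =>
    intro _
    have : (1 - 1/(r:ℝ)) * 1 + (1-b)/(r:ℝ) = u := by
      rw [hu]; field_simp; ring
    simpa [pow_one] using this.le
  | succ m ih =>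
    intro hm1
    have ihm := ih (by omega)
    have hvm : 1 - b ≤ v ^ m := by
      have hber := one_add_mul_le_pow (a := -(b / ((r:ℝ)-1))) (by
        have : b/((r:ℝ)-1) ≤ 1 := by rw [div_le_one hr1]; linarith
        linarith) m
      have hmr : (m:ℝ) ≤ (r:ℝ) - 1 := by
        have : (m:ℝ) + 2 ≤ (r:ℝ) := by exact_mod_cast hm1
        linarith
      have h1 : 1 - (m:ℝ) * (b/((r:ℝ)-1)) ≤ v ^ m := by
        calc 1 - (m:ℝ) * (b/((r:ℝ)-1)) = 1 + m * (-(b/((r:ℝ)-1))) := by ring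
        _ ≤ (1 + -(b/((r:ℝ)-1))) ^ m := hber
        _ = v ^ m := by rw [hv]; ring_nf
      have h2 : (m:ℝ) * (b/((r:ℝ)-1)) ≤ b := by
        have := mul_le_mul_of_nonneg_right hmr (le_of_lt (div_pos hb0 hr1))
        calc (m:ℝ) * (b/((r:ℝ)-1)) ≤ ((r:ℝ)-1) * (b/((r:ℝ)-1)) := this
        _ = b := by field_simp
      linarith
    -- u^(m+2) ≥ u * ((1-1/r) v^m + (1-b)/r) ≥ (1-1/r) v^(m+1) + (1-b)/r
    have step1 : u * ((1 - 1/(r:ℝ)) * v^m + (1-b)/(r:ℝ)) ≤ u ^ (m+1+1) := by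
      calc u * ((1 - 1/(r:ℝ)) * v^m + (1-b)/(r:ℝ)) ≤ u * u^(m+1) :=
            mul_le_mul_of_nonneg_left ihm hu0
      _ = u ^ (m+1+1) := by ring
    have step2 : (1 - 1/(r:ℝ)) * v^(m+1) + (1-b)/(r:ℝ) ≤
        u * ((1 - 1/(r:ℝ)) * v^m + (1-b)/(r:ℝ)) := by
      have huv : u - v = b * (1/((r:ℝ)-1) - 1/(r:ℝ)) := by
        rw [hu, hv]; ring
      have hdiff : u * ((1 - 1/(r:ℝ)) * v^m + (1-b)/(r:ℝ))
          - ((1 - 1/(r:ℝ)) * v^(m+1) + (1-b)/(r:ℝ))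
          = (1 - 1/(r:ℝ)) * v^m * (u - v) - (1-b)/(r:ℝ) * (1 - u) := by
        ring
      have e1 : (1 - 1/(r:ℝ)) * (u - v) = b / ((r:ℝ)*(r:ℝ)) := by
        rw [huv]; field_simp; ring
      have e2 : (1 - u) = b / (r:ℝ) := by rw [hu]; ring
      have e3 : (1 - 1/(r:ℝ)) * v^m * (u - v) = v^m * (b / ((r:ℝ)*(r:ℝ))) := by
        rw [← e1]; ring
      have e4 : (1-b)/(r:ℝ) * (1 - u) = (1-b) * (b / ((r:ℝ)*(r:ℝ))) := by
        rw [e2]; ring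
      have e5 : 0 ≤ (v^m - (1-b)) * (b / ((r:ℝ)*(r:ℝ))) :=
        mul_nonneg (by linarith) (le_of_lt (div_pos hb0 (mul_pos hr0 hr0)))
      nlinarith [hdiff, e3, e4, e5]
    linarith

end P2

namespace P2
variable {b : ℝ}

lemma keyIneq (hb0 : 0 < b) (hb1 : b ≤ 1) {n r : ℕ} (hn : 1 ≤ n) (hnr : n ≤ r) :
    Phi b n r ≤ (b - Phi b (n-1) (r-1)) / (r:ℝ) + Phi b (n-1) (r-1) := by
  obtain ⟨m, rfl⟩ : ∃ m, n = m + 1 := ⟨n - 1, by omega⟩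
  rcases Nat.lt_or_ge r 2 with hr2 | hr2
  · -- r = 1, n = 1, m = 0
    have hr1 : r = 1 := by omega
    have hm0 : m = 0 := by omega
    subst hr1 hm0
    simp [Phi]
  · have hQ := Qlem hb0 hb1 hr2 m (by omega)
    have hr0 : (0:ℝ) < (r:ℝ) := by
      have : (2:ℝ) ≤ (r:ℝ) := by exact_mod_cast hr2
      linarith
    have hcast : (((r-1 : ℕ)):ℝ) = (r:ℝ) - 1 := by
      have : 1 ≤ r := by omega
      push_cast [this]; ring
    simp only [Phi, Nat.add_sub_cancel, hcast]
    rw [div_add' _ _ _ (ne_of_gt hr0), le_div_iff₀ hr0]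
    have hQr := mul_le_mul_of_nonneg_right hQ hr0.le
    have expand : ((1 - 1/(r:ℝ)) * (1 - b/((r:ℝ)-1))^m + (1-b)/(r:ℝ)) * (r:ℝ)
        = (1 - b/((r:ℝ)-1))^m * (r:ℝ) - (1 - b/((r:ℝ)-1))^m + (1-b) := by
      field_simp
    rw [expand] at hQr
    nlinarith [hQr]

end P2

namespace P2

lemma Phi_le_one {b : ℝ} (hb0 : 0 < b) (hb1 : b ≤ 1) {n r : ℕ} (hr : 1 ≤ r) :
    Phi b n r ≤ 1 := by
  obtain ⟨h0, _⟩ := base_mem hb0 hb1 hr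
  have := pow_nonneg h0 n
  simp only [Phi]; linarith

open GreedyAux GrC

variable {α : Type*} [DecidableEq α] [Fintype α]

lemma P2core
    {I : Finset α → Prop} {f g : Finset α → ℝ} {K : ℕ}
    (hUnif : ∀ S : Finset α, I S ↔ S.card ≤ K)
    (hg : PolymatroidFn g)
    (hagree : ∀ S, I S → g S = f S)
    {b : ℝ} (hb0 : 0 < b) (hb1 : b ≤ 1)
    (hcond : ∀ a : α, g univ - g (univ.erase a) ≥ (1 - b) * g {a})
    (O : Finset α) (hOK : O.card ≤ K) :
    ∀ (l : List α) (S : Finset α) (A : ℝ),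
      Chain I f S l → S.card + l.length = K →
      g O + (1 - b) * (g S - A) ≤ g (O ∪ S) →
      Phi b l.length (K - (O ∩ S).card) * (g O - b * g S - (1 - b) * A)
        ≤ b * (g (endS S l) - g S) := by
  intro l
  induction l with
  | nil =>
    intro S A _ _ _
    simp [Phi_zero]
  | cons a l ih =>
    intro S A hch hcard hH
    obtain ⟨haS, hIaS, hgr, hch'⟩ := hch
    have hScard : S.card + (l.length + 1) = K := by simpa using hcard
    have hmS : (O ∩ S).card ≤ S.card := card_le_card inter_subset_right
    set m := (O ∩ S).card with hm
    set n := l.length + 1 with hn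
    have hnr : n ≤ K - m := by omega
    have hr1 : 1 ≤ K - m := by omega
    have hrR : (0:ℝ) < ((K - m : ℕ) : ℝ) := by exact_mod_cast hr1
    set S' := insert a S with hS'
    set ρ := g S' - g S with hρ
    have hρ0 : 0 ≤ ρ := by
      have := hg.1 (subset_insert a S)
      rw [hρ]; linarith
    set E := g O - b * g S - (1 - b) * A with hE
    -- main per-step constraint : E ≤ (K-m) * ρ
    have hcon : E ≤ ((K - m : ℕ) : ℝ) * ρ := by
      have hpeel := peel_upper hg S O
      have hpt : ∀ x ∈ O \ S, g (insert x S) - g S ≤ ρ := by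
        intro x hx
        obtain ⟨hxO, hxS⟩ := mem_sdiff.1 hx
        have hIx : I (insert x S) := by
          rw [hUnif]
          calc (insert x S).card ≤ S.card + 1 := card_insert_le x S
          _ ≤ K := by omega
        have hIS' : I S' := hIaS
        have hfle := hgr x hxS hIx
        have e1 : g (insert x S) = f (insert x S) := hagree _ hIx
        have e2 : g S' = f S' := hagree _ hIS'
        rw [hρ, e2]; linarith [e1, hfle]
      have hsum : ∑ x ∈ O \ S, (g (insert x S) - g S) ≤ ((O \ S).card : ℝ) * ρ := by
        calc ∑ x ∈ O \ S, (g (insert x S) - g S) ≤ (O \ S).card • ρ :=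
              sum_le_card_nsmul _ _ _ hpt
        _ = ((O \ S).card : ℝ) * ρ := by simp [nsmul_eq_mul]
      have hcards : (O ∩ S).card + (O \ S).card = O.card := card_inter_add_card_sdiff O S
      have hcardle : (O \ S).card ≤ K - m := by omega
      have hcardleR : (((O \ S).card : ℕ) : ℝ) ≤ ((K - m : ℕ) : ℝ) := by exact_mod_cast hcardle
      have hOS : g (O ∪ S) ≤ g S + ((K - m : ℕ) : ℝ) * ρ := by
        rw [union_comm O S]
        calc g (S ∪ O) ≤ g S + ∑ x ∈ O \ S, (g (insert x S) - g S) := hpeel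
        _ ≤ g S + ((O \ S).card : ℝ) * ρ := by linarith
        _ ≤ g S + ((K - m : ℕ) : ℝ) * ρ := by nlinarith
      rw [hE]; linarith
    have hend : endS S (a :: l) = endS S' l := rfl
    have hgend : g S' ≤ g (endS S' l) := g_le_endS hg.1 S' l
    rcases le_or_gt E 0 with hEneg | hEpos
    · -- trivial case
      have hPhi0 : 0 ≤ Phi b (a :: l).length (K - m) := Phi_nonneg hb0 hb1 hr1
      have h1 : Phi b (a :: l).length (K - m) * E ≤ 0 :=
        mul_nonpos_of_nonneg_of_nonpos hPhi0 hEneg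
      have h2 : 0 ≤ b * (g (endS S (a :: l)) - g S) := by
        rw [hend]
        have : g S ≤ g S' := by rw [hρ] at hρ0; linarith
        nlinarith
      calc Phi b (a :: l).length (K - m) * (g O - b * g S - (1 - b) * A)
          = Phi b (a :: l).length (K - m) * E := by rw [hE]
      _ ≤ 0 := h1
      _ ≤ _ := h2
    · have hScard' : S'.card + l.length = K := by
        rw [hS', card_insert_of_notMem haS]; omega
      by_cases haO : a ∈ O
      · -- a ∈ O case
        have hintr : O ∩ S' = insert a (O ∩ S) := inter_insert_of_mem haO
        have hcard' : (O ∩ S').card = m + 1 := by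
          rw [hintr, card_insert_of_notMem (fun h => haS (mem_inter.1 h).2)]
        have hH' : g O + (1 - b) * (g S' - (A + ρ)) ≤ g (O ∪ S') := by
          have : O ∪ S' = O ∪ S := by
            rw [hS', union_insert, insert_eq_self.2 (mem_union_left _ haO)]
          rw [this]
          have : g S' - (A + ρ) = g S - A := by rw [hρ]; ring
          rw [this]; exact hH
        have hIH := ih S' (A + ρ) hch' hScard' hH'
        rw [hcard'] at hIH
        have hsub : K - (m + 1) = (K - m) - 1 := by omega
        rw [hsub] at hIH
        set Φ' := Phi b l.length ((K - m) - 1) with hΦ'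
        have hIH' : Φ' * (E - ρ) ≤ b * (g (endS S' l) - g S') := by
          have : g O - b * g S' - (1 - b) * (A + ρ) = E - ρ := by
            rw [hE, hρ]; ring
          rw [← this]; exact hIH
        have hΦ'b : Φ' ≤ b := Phi_le_b hb0 hb1 (by omega)
        have hΦ'0 : 0 ≤ Φ' := by
          rcases Nat.eq_zero_or_pos l.length with hl0 | hl1
          · rw [hΦ', hl0, Phi_zero]
          · exact Phi_nonneg hb0 hb1 (by omega)
        have hkey : Phi b n (K - m) ≤ (b - Φ') / ((K - m : ℕ) : ℝ) + Φ' := by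
          have := keyIneq (n := n) (r := K - m) hb0 hb1 (by omega) hnr
          simpa [hn, hΦ'] using this
        have hρE : E / ((K - m : ℕ) : ℝ) ≤ ρ := by
          rw [div_le_iff₀ hrR]; linarith
        have step1 : (E / ((K - m : ℕ) : ℝ)) * (b - Φ') ≤ ρ * (b - Φ') :=
          mul_le_mul_of_nonneg_right hρE (by linarith)
        have step3 : E * Phi b n (K - m) ≤ E * ((b - Φ') / ((K - m : ℕ) : ℝ) + Φ') :=
          mul_le_mul_of_nonneg_left hkey hEpos.le
        have assemble : b * (g (endS S (a :: l)) - g S) = b * ρ + b * (g (endS S' l) - g S') := by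
          rw [hend, hρ]; ring
        rw [assemble]
        have expand : E * ((b - Φ') / ((K - m : ℕ) : ℝ) + Φ')
            = (E / ((K - m : ℕ) : ℝ)) * (b - Φ') + Φ' * E := by ring
        calc Phi b (a :: l).length (K - m) * (g O - b * g S - (1 - b) * A)
            = E * Phi b n (K - m) := by
              simp only [List.length_cons, ← hn, ← hE]; ring
        _ ≤ E * ((b - Φ') / ((K - m : ℕ) : ℝ) + Φ') := step3
        _ = (E / ((K - m : ℕ) : ℝ)) * (b - Φ') + Φ' * E := expand
        _ ≤ ρ * (b - Φ') + Φ' * E := by linarith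
        _ = b * ρ + Φ' * (E - ρ) := by ring
        _ ≤ b * ρ + b * (g (endS S' l) - g S') := by linarith
      · -- a ∉ O case
        have hintr : O ∩ S' = O ∩ S := inter_insert_of_notMem haO
        have hH' : g O + (1 - b) * (g S' - A) ≤ g (O ∪ S') := by
          have hunion : O ∪ S' = insert a (O ∪ S) := by rw [hS', union_insert]
          have haOS : a ∉ O ∪ S := by simp [haO, haS]
          have h1 : g univ - g (univ.erase a) ≤ g (insert a (O ∪ S)) - g (O ∪ S) :=
            univ_marg_le hg haOS
          have h2 := hcond a
          have h3 : g (insert a S) - g S ≤ g {a} := marg_le_single hg haS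
          have h4 : (1 - b) * ρ ≤ (1 - b) * g {a} := by
            apply mul_le_mul_of_nonneg_left _ (by linarith)
            rw [hρ]; exact h3
          rw [hunion]
          have : g S' - A = (g S - A) + ρ := by rw [hρ]; ring
          rw [this]; nlinarith
        have hIH := ih S' A hch' hScard' hH'
        rw [hintr] at hIH
        set Φ' := Phi b l.length (K - m) with hΦ'
        have hIH' : Φ' * (E - b * ρ) ≤ b * (g (endS S' l) - g S') := by
          have : g O - b * g S' - (1 - b) * A = E - b * ρ := by
            rw [hE, hρ]; ring
          rw [← this]; exact hIH
        have hΦ'1 : Φ' ≤ 1 := Phi_le_one hb0 hb1 hr1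
        have hΦ'0 : 0 ≤ Φ' := Phi_nonneg hb0 hb1 hr1
        have hid : Phi b n (K - m) = Φ' + (b / ((K - m : ℕ) : ℝ)) * (1 - Φ') := by
          rw [hn, hΦ']; exact Phi_succ b hr1
        have hρE : E / ((K - m : ℕ) : ℝ) ≤ ρ := by
          rw [div_le_iff₀ hrR]; linarith
        have step1 : (E / ((K - m : ℕ) : ℝ)) * (b * (1 - Φ')) ≤ ρ * (b * (1 - Φ')) :=
          mul_le_mul_of_nonneg_right hρE (by nlinarith)
        have assemble : b * (g (endS S (a :: l)) - g S) = b * ρ + b * (g (endS S' l) - g S') := by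
          rw [hend, hρ]; ring
        rw [assemble]
        calc Phi b (a :: l).length (K - m) * (g O - b * g S - (1 - b) * A)
            = E * Phi b n (K - m) := by
              simp only [List.length_cons, ← hn, ← hE]; ring
        _ = E * (Φ' + (b / ((K - m : ℕ) : ℝ)) * (1 - Φ')) := by rw [hid]
        _ = (E / ((K - m : ℕ) : ℝ)) * (b * (1 - Φ')) + Φ' * E := by
            field_simp
            ring
        _ ≤ ρ * (b * (1 - Φ')) + Φ' * E := by linarith
        _ = b * ρ + Φ' * (E - b * ρ) := by ring
        _ ≤ b * ρ + b * (g (endS S' l) - g S') := by linarith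

end P2

namespace P1

open GreedyAux GrC

variable {α : Type*} [DecidableEq α] [Fintype α]

variable {I : Finset α → Prop} {f g : Finset α → ℝ}

lemma exists_maximal_ext (hHer : Hereditary I) {O : Finset α} (hO : I O) :
    ∃ O', O ⊆ O' ∧ I O' ∧ ∀ a ∉ O', ¬ I (insert a O') := by
  have main : ∀ d (T : Finset α), I T → Fintype.card α - T.card ≤ d →
      ∃ O', T ⊆ O' ∧ I O' ∧ ∀ a ∉ O', ¬ I (insert a O') := by
    intro d
    induction d with
    | zero =>
      intro T hT hle
      refine ⟨T, subset_rfl, hT, fun a ha _ => ha ?_⟩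
      have h1 : T.card = Fintype.card α := le_antisymm (card_le_univ T) (by omega)
      have h2 : T = univ := card_eq_iff_eq_univ T |>.1 h1
      rw [h2]; exact mem_univ a
    | succ d ihd =>
      intro T hT hle
      by_cases h : ∃ a, a ∉ T ∧ I (insert a T)
      · obtain ⟨a, haT, hIa⟩ := h
        obtain ⟨O', h1, h2, h3⟩ := ihd (insert a T) hIa (by
          have := card_insert_of_notMem haT
          have := card_le_univ (insert a T)
          omega)
        exact ⟨O', (subset_insert a T).trans h1, h2, h3⟩
      · exact ⟨T, subset_rfl, hT, fun a ha hIa => h ⟨a, ha, hIa⟩⟩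
  exact main _ O hO le_rfl

lemma exists_ext_card (hHer : Hereditary I) (hAug : Augmentation I)
    {O' : Finset α} (hO' : I O') :
    ∀ d (S : Finset α), I S → O'.card - S.card ≤ d → S.card ≤ O'.card →
      ∃ C, S ⊆ C ∧ I C ∧ C.card = O'.card ∧ ∀ x ∈ C, x ∈ S ∨ x ∈ O' := by
  intro d
  induction d with
  | zero =>
    intro S hS hd hle
    exact ⟨S, subset_rfl, hS, by omega, fun x hx => Or.inl hx⟩
  | succ d ihd =>
    intro S hS hd hle
    rcases eq_or_lt_of_le hle with heq | hlt
    · exact ⟨S, subset_rfl, hS, heq, fun x hx => Or.inl hx⟩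
    · obtain ⟨j, hjO, hjS, hIj⟩ := hAug hS hO' hlt
      have hcard := card_insert_of_notMem hjS
      obtain ⟨C, h1, h2, h3, h4⟩ := ihd (insert j S) hIj (by omega) (by omega)
      refine ⟨C, (subset_insert j S).trans h1, h2, h3, fun x hx => ?_⟩
      rcases h4 x hx with h | h
      · rcases mem_insert.1 h with rfl | h
        · exact Or.inr hjO
        · exact Or.inl h
      · exact Or.inr h

lemma card_Bs [DecidablePred I] (hHer : Hereditary I) (hAug : Augmentation I)
    {G O' : Finset α} (hGO' : G.card = O'.card) (hO' : I O')
    {S : Finset α} (hS : I S) (hSG : S ⊆ G) :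
    (O' \ G).card ≤ ((O' \ G).filter (fun o => I (insert o S))).card + (S \ O').card := by
  have hle : S.card ≤ O'.card := hGO' ▸ card_le_card hSG
  obtain ⟨C, hSC, hIC, hCcard, hCmem⟩ := exists_ext_card hHer hAug hO' _ S hS le_rfl hle
  have hD : (C \ S) \ G ⊆ (O' \ G).filter (fun o => I (insert o S)) := by
    intro o ho
    have h1 : o ∈ C := (mem_sdiff.1 (mem_sdiff.1 ho).1).1
    have h2 : o ∉ S := (mem_sdiff.1 (mem_sdiff.1 ho).1).2
    have h3 : o ∉ G := (mem_sdiff.1 ho).2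
    have h4 : o ∈ O' := (hCmem o h1).resolve_left h2
    exact mem_filter.2 ⟨mem_sdiff.2 ⟨h4, h3⟩, hHer hIC (insert_subset h1 hSC)⟩
  have h9 := card_le_card hD
  have h1 : (C \ S).card + S.card = C.card := card_sdiff_add_card_eq_card hSC
  have h2 : ((C \ S) \ G).card + ((C \ S) ∩ G).card = (C \ S).card := by
    have := card_inter_add_card_sdiff (C \ S) G
    omega
  have h3 : (C \ S) ∩ G ⊆ (O' ∩ G) \ S := by
    intro x hx
    obtain ⟨hx1, hx2⟩ := mem_inter.1 hx
    obtain ⟨hxC, hxS⟩ := mem_sdiff.1 hx1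
    exact mem_sdiff.2 ⟨mem_inter.2 ⟨(hCmem x hxC).resolve_left hxS, hx2⟩, hxS⟩
  have h3' := card_le_card h3
  have h4 : ((O' ∩ G) \ S).card + ((O' ∩ G) ∩ S).card = (O' ∩ G).card := by
    have := card_inter_add_card_sdiff (O' ∩ G) S
    omega
  have h5 : (O' ∩ G) ∩ S = O' ∩ S := by
    ext x
    simp only [mem_inter]
    exact ⟨fun ⟨⟨h1, _⟩, h3⟩ => ⟨h1, h3⟩, fun ⟨h1, h2⟩ => ⟨⟨h1, hSG h2⟩, h2⟩⟩
  have h6 : (O' \ G).card + (O' ∩ G).card = O'.card := by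
    have := card_inter_add_card_sdiff O' G
    omega
  have h7 : (S \ O').card + (S ∩ O').card = S.card := by
    have := card_inter_add_card_sdiff S O'
    omega
  have h8 : (S ∩ O').card = (O' ∩ S).card := by rw [inter_comm]
  rw [h5] at h4
  omega

end P1

namespace P1

open GreedyAux GrC

variable {α : Type*} [DecidableEq α] [Fintype α]
variable {I : Finset α → Prop} {f g : Finset α → ℝ}

def usL (O' : Finset α) : List α → Finset α → List (Finset α × α)
  | [], _ => []
  | a :: l, S => if a ∈ O' then usL O' l (insert a S) else (S, a) :: usL O' l (insert a S)

noncomputable def Wsum (g : Finset α → ℝ) (L : List (Finset α × α)) : ℝ :=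
  (L.map (fun p => g (insert p.2 p.1) - g p.1)).sum

@[simp] lemma usL_nil (O' S : Finset α) : usL O' [] S = [] := rfl

lemma usL_cons_mem {O' S : Finset α} {a : α} (l : List α) (h : a ∈ O') :
    usL O' (a :: l) S = usL O' l (insert a S) := by simp [usL, h]

lemma usL_cons_not_mem {O' S : Finset α} {a : α} (l : List α) (h : a ∉ O') :
    usL O' (a :: l) S = (S, a) :: usL O' l (insert a S) := by simp [usL, h]

@[simp] lemma Wsum_nil (g : Finset α → ℝ) : Wsum g ([] : List (Finset α × α)) = 0 := rfl

lemma Wsum_cons (g : Finset α → ℝ) (p : Finset α × α) (L : List (Finset α × α)) :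
    Wsum g (p :: L) = (g (insert p.2 p.1) - g p.1) + Wsum g L := by simp [Wsum]

lemma len_usL {O' : Finset α} :
    ∀ (l : List α) (S : Finset α), Chain I f S l →
      (usL O' l S).length + (S \ O').card = (endS S l \ O').card := by
  intro l
  induction l with
  | nil => intro S _; simp
  | cons a l ih =>
    intro S hch
    obtain ⟨haS, _, _, hch'⟩ := hch
    by_cases haO : a ∈ O'
    · rw [usL_cons_mem l haO, endS_cons]
      have : insert a S \ O' = S \ O' := insert_sdiff_of_mem S haO
      rw [← this]
      exact ih (insert a S) hch'
    · rw [usL_cons_not_mem l haO, endS_cons, List.length_cons]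
      have h1 : insert a S \ O' = insert a (S \ O') := insert_sdiff_of_notMem S haO
      have h2 : a ∉ S \ O' := fun h => haS (mem_sdiff.1 h).1
      have h3 := ih (insert a S) hch'
      rw [h1, card_insert_of_notMem h2] at h3
      omega

lemma Wsum_le (hg : PolymatroidFn g) {O' : Finset α} :
    ∀ (l : List α) (S : Finset α), Chain I f S l →
      Wsum g (usL O' l S) ≤ g (endS S l) - g S := by
  intro l
  induction l with
  | nil => intro S _; simp
  | cons a l ih =>
    intro S hch
    obtain ⟨haS, _, _, hch'⟩ := hch
    have hmono : g S ≤ g (insert a S) := hg.1 (subset_insert a S)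
    by_cases haO : a ∈ O'
    · rw [usL_cons_mem l haO, endS_cons]
      have := ih (insert a S) hch'
      linarith
    · rw [usL_cons_not_mem l haO, endS_cons, Wsum_cons]
      have := ih (insert a S) hch'
      simp only
      linarith

lemma Wsum_le_singles (hg : PolymatroidFn g) {O' : Finset α} :
    ∀ (l : List α) (S : Finset α), Chain I f S l →
      Wsum g (usL O' l S) + ∑ j ∈ S \ O', g {j} ≤ ∑ j ∈ endS S l \ O', g {j} := by
  intro l
  induction l with
  | nil => intro S _; simp
  | cons a l ih =>
    intro S hch
    obtain ⟨haS, _, _, hch'⟩ := hch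
    by_cases haO : a ∈ O'
    · rw [usL_cons_mem l haO, endS_cons]
      have heq : insert a S \ O' = S \ O' := insert_sdiff_of_mem S haO
      have := ih (insert a S) hch'
      rw [heq] at this
      exact this
    · rw [usL_cons_not_mem l haO, endS_cons, Wsum_cons]
      have h1 : insert a S \ O' = insert a (S \ O') := insert_sdiff_of_notMem S haO
      have h2 : a ∉ S \ O' := fun h => haS (mem_sdiff.1 h).1
      have h3 := ih (insert a S) hch'
      rw [h1, sum_insert h2] at h3
      have h4 : g (insert a S) - g S ≤ g {a} := marg_le_single hg haS
      simp only
      linarith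

lemma pick [DecidablePred I] (hHer : Hereditary I) (hAug : Augmentation I)
    (hg : PolymatroidFn g) (hagree : ∀ S, I S → g S = f S)
    {G O' : Finset α} (hGO' : G.card = O'.card) (hO' : I O') :
    ∀ (l : List α) (S : Finset α), Chain I f S l → I S → S ⊆ G → endS S l = G →
      ∃ R : Finset α, R ⊆ O' \ G ∧ R.card = (usL O' l S).length ∧
        ∑ o ∈ R, (g (insert o G) - g G) ≤ Wsum g (usL O' l S) := by
  intro l
  induction l with
  | nil =>
    intro S _ _ _ _
    exact ⟨∅, empty_subset _, by simp, by simp⟩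
  | cons a l ih =>
    intro S hch hIS hSG hend
    obtain ⟨haS, hIaS, hgr, hch'⟩ := hch
    have haG : a ∈ G := by
      rw [← hend, endS_cons]
      exact subset_endS _ _ (mem_insert_self a S)
    have hS'G : insert a S ⊆ G := insert_subset haG hSG
    have hend' : endS (insert a S) l = G := hend
    obtain ⟨R', hR'sub, hR'card, hR'sum⟩ := ih (insert a S) hch' hIaS hS'G hend'
    by_cases haO : a ∈ O'
    · rw [usL_cons_mem l haO]
      exact ⟨R', hR'sub, hR'card, hR'sum⟩
    · rw [usL_cons_not_mem l haO]
      -- cardinality bound gives a fresh element of Bs S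
      have hlen : (usL O' (a :: l) S).length + (S \ O').card = (G \ O').card := by
        have := len_usL (O' := O') (a :: l) S ⟨haS, hIaS, hgr, hch'⟩
        rwa [hend] at this
      have hBcard := card_Bs hHer hAug hGO' hO' hIS hSG
      have hGOd : (G \ O').card = (O' \ G).card := by
        have h1 := card_inter_add_card_sdiff G O'
        have h2 := card_inter_add_card_sdiff O' G
        have h3 : (G ∩ O').card = (O' ∩ G).card := by rw [inter_comm]
        omega
      have hlen' : (usL O' (a :: l) S).length = R'.card + 1 := by
        rw [usL_cons_not_mem l haO, List.length_cons, hR'card]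
      have hcardlt : R'.card < ((O' \ G).filter (fun o => I (insert o S))).card := by
        omega
      have hns : ¬ ((O' \ G).filter (fun o => I (insert o S)) ⊆ R') := by
        intro h
        have := card_le_card h
        omega
      obtain ⟨x, hxB, hxR⟩ := not_subset.1 hns
      have hxOG : x ∈ O' \ G := (mem_filter.1 hxB).1
      have hxI : I (insert x S) := (mem_filter.1 hxB).2
      have hxG : x ∉ G := (mem_sdiff.1 hxOG).2
      have hxS : x ∉ S := fun h => hxG (hSG h)
      refine ⟨insert x R', insert_subset hxOG hR'sub, ?_, ?_⟩
      · rw [card_insert_of_notMem hxR, List.length_cons, hR'card]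
      · rw [sum_insert hxR, Wsum_cons]
        have t1 : g (insert x G) - g G ≤ g (insert x S) - g S := hg.2.1 hSG x hxG
        have t2 : g (insert x S) - g S ≤ g (insert a S) - g S := by
          have hf := hgr x hxS hxI
          have e1 : g (insert x S) = f (insert x S) := hagree _ hxI
          have e2 : g (insert a S) = f (insert a S) := hagree _ hIaS
          rw [e1, e2]; linarith
        simp only
        linarith

end P1


/-- Improved greedy bounds in terms of the partial curvature `b(f)` when an
extension `g` with total curvature `b(f)` exists. -/
theorem greedy_bound_partial_curvature {α : Type*} [DecidableEq α] [Fintype α]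
    (I : Finset α → Prop) (hI : IsMatroid I) (K : ℕ)
    (hrank : ∀ B : Finset α, I B → (∀ a ∉ B, ¬ I (insert a B)) → B.card = K)
    (f : Finset α → ℝ) (hf : PolymatroidOn I f)
    (hpos : ∃ j : α, I {j} ∧ 0 < f {j})
    (g : Finset α → ℝ) (hg : PolymatroidFn g)
    (hagree : ∀ S, I S → g S = f S)
    (hcond : ∀ a : α, g Finset.univ - g (Finset.univ.erase a) ≥
      (1 - partialCurvature I f) * g {a})
    (heq : ∃ a : α, g Finset.univ - g (Finset.univ.erase a) =
      (1 - partialCurvature I f) * g {a})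
    (G O : Finset α) (hG : IsGreedy I f G) (hO : IsOptimal I f O) :
    (1 + partialCurvature I f) * f G ≥ f O ∧
      ((∀ S : Finset α, I S ↔ S.card ≤ K) → 0 < partialCurvature I f →
        f G ≥ (1 / partialCurvature I f) *
          (1 - (1 - partialCurvature I f / (K : ℝ)) ^ K) * f O) := by
  classical
  clear heq
  set b := partialCurvature I f with hbdef
  obtain ⟨j0, hIj0, hfj0⟩ := hpos
  have hf0 : f ∅ = 0 := hf.1
  set PCset : Set ℝ := {x : ℝ | ∃ (j : α) (A : Finset α), I A ∧ j ∈ A ∧ f {j} ≠ f ∅ ∧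
    x = 1 - (f A - f (A.erase j)) / (f {j} - f ∅)} with hPCset
  have hmem0 : (0:ℝ) ∈ PCset := by
    refine ⟨j0, {j0}, hIj0, mem_singleton_self j0, ?_, ?_⟩
    · rw [hf0]; exact ne_of_gt hfj0
    · rw [erase_singleton, div_self, sub_self]
      rw [hf0, sub_zero]; exact ne_of_gt hfj0
  have hub : ∀ x ∈ PCset, x ≤ 1 := by
    rintro x ⟨j, A, hIA, hjA, hne, rfl⟩
    have hIj : I {j} := hI.1.2 hIA (singleton_subset_iff.2 hjA)
    have hden : 0 < f {j} - f ∅ := by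
      have h1 : f ∅ ≤ f {j} := hf.2.1 (empty_subset _) hIj
      rcases lt_or_eq_of_le h1 with h | h
      · linarith
      · exact absurd h.symm hne
    have hnum : 0 ≤ f A - f (A.erase j) := by
      have := hf.2.1 (erase_subset j A) hIA
      linarith
    have := div_nonneg hnum hden.le
    linarith
  have hbdd : BddAbove PCset := ⟨1, hub⟩
  have hb0 : 0 ≤ b := by
    rw [hbdef]
    exact le_csSup hbdd hmem0
  have hb1 : b ≤ 1 := by
    rw [hbdef]
    exact csSup_le ⟨0, hmem0⟩ hub
  obtain ⟨S0, hS0⟩ := hI.1.1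
  have hIempty : I ∅ := hI.1.2 hS0 (empty_subset S0)
  obtain ⟨l, hchain, hendl⟩ := GrC.exists_Chain hG.1
  have hIG : I G := hendl ▸ GrC.indep_endS hchain hIempty
  have hGcard : G.card = K := hrank G hIG hG.2
  have hlcard : l.length = K := by
    have := GrC.card_endS hchain
    rw [hendl, hGcard] at this
    simpa using this.symm
  have hfG : g G = f G := hagree G hIG
  have hfO : g O = f O := hagree O hO.1
  constructor
  · -- general matroid bound
    obtain ⟨O', hOO', hIO', hO'max⟩ := P1.exists_maximal_ext hI.1.2 hO.1
    have hO'card : O'.card = K := hrank O' hIO' hO'max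
    have hGO' : G.card = O'.card := by rw [hGcard, hO'card]
    have hchain' : GrC.Chain I f ∅ l := hchain
    obtain ⟨R, hRsub, hRcard, hRsum⟩ :=
      P1.pick hI.1.2 hI.2 hg hagree hGO' hIO' l ∅ hchain hIempty (empty_subset G) hendl
    have hGOd : (G \ O').card = (O' \ G).card := by
      have h1 := card_inter_add_card_sdiff G O'
      have h2 := card_inter_add_card_sdiff O' G
      have h3 : (G ∩ O').card = (O' ∩ G).card := by rw [inter_comm]
      omega
    have hlen : (P1.usL O' l ∅).length = (G \ O').card := by
      have := P1.len_usL (O' := O') l ∅ hchain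
      rw [hendl] at this
      simpa using this
    have hReq : R = O' \ G := by
      apply eq_of_subset_of_card_le hRsub
      rw [hRcard, hlen, hGOd]
    set W := P1.Wsum g (P1.usL O' l ∅) with hW
    have hW1 : g (O' ∪ G) ≤ g G + W := by
      have hpeel := GreedyAux.peel_upper hg G O'
      have : ∑ x ∈ O' \ G, (g (insert x G) - g G) ≤ W := by
        rw [← hReq]; exact hRsum
      rw [union_comm]
      linarith
    have hsing : W ≤ ∑ j ∈ G \ O', g {j} := by
      have := P1.Wsum_le_singles hg (O' := O') l ∅ hchain
      rw [hendl] at this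
      simpa using this
    have hW2 : g O' + (1 - b) * W ≤ g (O' ∪ G) := by
      have hpeel := GreedyAux.peel_lower hg O' G
      have hpt : ∀ x ∈ G \ O', (1 - b) * g {x} ≤ g univ - g (univ.erase x) := by
        intro x _
        exact hcond x
      have hsum : ∑ x ∈ G \ O', (1 - b) * g {x} ≤ ∑ x ∈ G \ O', (g univ - g (univ.erase x)) :=
        sum_le_sum hpt
      rw [← mul_sum] at hsum
      have h1b : 0 ≤ 1 - b := by linarith
      have : (1 - b) * W ≤ (1 - b) * ∑ j ∈ G \ O', g {j} :=
        mul_le_mul_of_nonneg_left hsing h1b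
      linarith
    have hW3 : W ≤ g G := by
      have := P1.Wsum_le hg (O' := O') l ∅ hchain
      rw [hendl, hg.2.2] at this
      linarith
    have hbW : b * W ≤ b * g G := mul_le_mul_of_nonneg_left hW3 hb0
    have h1 : f O ≤ f O' := hf.2.1 hOO' hIO'
    have h2 : g O' = f O' := hagree _ hIO'
    have : g O' ≤ g G + b * g G := by linarith
    rw [ge_iff_le]
    have hgoal : f O ≤ (1 + b) * f G := by
      rw [← hfG]
      linarith
    exact hgoal
  · intro hUnif hbpos
    have hOK : O.card ≤ K := (hUnif O).1 hO.1
    have hcore := P2.P2core hUnif hg hagree hbpos hb1 hcond O hOK l ∅ 0 hchain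
      (by simpa using hlcard)
      (by rw [union_empty, hg.2.2]; simp)
    rw [hendl, hg.2.2, inter_empty, card_empty, Nat.sub_zero, hlcard] at hcore
    have hcore' : (1 - (1 - b / (K:ℝ)) ^ K) * g O ≤ b * g G := by
      have hphi : P2.Phi b K K = 1 - (1 - b / (K:ℝ)) ^ K := rfl
      rw [hphi] at hcore
      calc (1 - (1 - b / (K:ℝ)) ^ K) * g O
          = (1 - (1 - b / (K:ℝ)) ^ K) * (g O - b * 0 - (1 - b) * 0) := by ring
      _ ≤ b * (g G - 0) := hcore
      _ = b * g G := by ring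
    rw [ge_iff_le, hbdef] at *
    rw [← hfG, ← hfO]
    rw [div_mul_eq_mul_div, div_mul_eq_mul_div, div_le_iff₀ hbpos]
    calc 1 * (1 - (1 - b / (K:ℝ)) ^ K) * g O = (1 - (1 - b / (K:ℝ)) ^ K) * g O := by ring
    _ ≤ b * g G := hcore'
    _ = g G * b := by ring
end

section
/- Let K = k(l−1) + m with l, m positive integers, 0 < m ≤ k, and K ≤ |X|. Let (X, 𝓘) be the uniform matroid of rank K and f : 2^X → ℝ a polymatroid set function. Then every k-batch greedy solution S and every optimal solution O satisfy f(S) ≥ [1 − (1 − m/(k·l)) · (1 − 1/l)^{l−1}] · f(O). -/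
open Finset

variable {α : Type*} [DecidableEq α] [Fintype α]

lemma cover_ineq (f : Finset α → ℝ) (hmono : SetMonotone f) (hsub : SetSubmodular f)
    (T : Finset α) :
    ∀ R : Finset α, Disjoint T R → ∀ b : ℕ,
      ((R.card - 1).choose b : ℝ) * (f (T ∪ R) - f T) ≤
        ∑ J ∈ R.powersetCard (b + 1), (f (T ∪ J) - f T) := by
  intro R
  induction R using Finset.induction_on with
  | empty =>
    intro _ b
    have h0 : 0 ≤ ∑ J ∈ (∅ : Finset α).powersetCard (b + 1), (f (T ∪ J) - f T) := by
      apply Finset.sum_nonneg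
      intro J _
      have := hmono (Finset.subset_union_left (s₁ := T) (s₂ := J))
      linarith
    simpa using h0
  | @insert x R' hx ih =>
    intro hdisj b
    have hxT : x ∉ T := fun h => (Finset.disjoint_right.mp hdisj (mem_insert_self x R')) h
    have hdisj' : Disjoint T R' := hdisj.mono_right (subset_insert x R')
    have hxTR' : x ∉ T ∪ R' := by simp [hxT, hx]
    have hcard : (insert x R').card = R'.card + 1 := card_insert_of_notMem hx
    set G' := f (T ∪ R') - f T with hG'def
    set D := f (T ∪ insert x R') - f (T ∪ R') with hDdef
    have hTins : T ∪ insert x R' = insert x (T ∪ R') := by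
      ext a; simp [or_left_comm, or_comm]
    have hD0 : 0 ≤ D := by
      have := hmono (subset_insert x (T ∪ R'))
      rw [hDdef, hTins]; linarith
    have hG'0 : 0 ≤ G' := by
      have := hmono (Finset.subset_union_left (s₁ := T) (s₂ := R'))
      rw [hG'def]; linarith
    have hDJ : ∀ J0 : Finset α, J0 ⊆ R' → D ≤ f (T ∪ insert x J0) - f (T ∪ J0) := by
      intro J0 hJ0R'
      have hsubs : T ∪ J0 ⊆ T ∪ R' := union_subset_union_right hJ0R'
      have h1 := hsub hsubs x hxTR'
      have hTinsJ : T ∪ insert x J0 = insert x (T ∪ J0) := by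
        ext a; simp [or_left_comm, or_comm]
      rw [hDdef, hTins, hTinsJ]
      linarith
    have hnnA : ∀ n : ℕ, 0 ≤ ∑ J ∈ R'.powersetCard n, (f (T ∪ J) - f T) := by
      intro n
      apply Finset.sum_nonneg
      intro J _
      have := hmono (Finset.subset_union_left (s₁ := T) (s₂ := J))
      linarith
    have hnnB : ∀ n : ℕ, 0 ≤ ∑ J ∈ R'.powersetCard n, (f (T ∪ insert x J) - f T) := by
      intro n
      apply Finset.sum_nonneg
      intro J _
      have := hmono (Finset.subset_union_left (s₁ := T) (s₂ := insert x J))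
      linarith
    -- split the powerset sum
    have hsplit := Finset.powersetCard_succ_insert hx b
    have hdd : Disjoint (R'.powersetCard (b+1)) ((R'.powersetCard b).image (insert x)) := by
      rw [Finset.disjoint_left]
      intro J hJ hJ'
      obtain ⟨J0, hJ0, rfl⟩ := Finset.mem_image.mp hJ'
      exact hx ((Finset.mem_powersetCard.mp hJ).1 (mem_insert_self x J0))
    have hinj : ∀ a ∈ R'.powersetCard b, ∀ c ∈ R'.powersetCard b,
        insert x a = insert x c → a = c := by
      intro a ha c hc h
      have hxa : x ∉ a := fun hh => hx ((Finset.mem_powersetCard.mp ha).1 hh)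
      have hxc : x ∉ c := fun hh => hx ((Finset.mem_powersetCard.mp hc).1 hh)
      have := congrArg (fun s => Finset.erase s x) h
      simpa [Finset.erase_insert hxa, Finset.erase_insert hxc] using this
    rw [hsplit, Finset.sum_union hdd, Finset.sum_image hinj, hcard]
    simp only [Nat.add_sub_cancel]
    have hsum2 : (R'.card.choose b : ℝ) * D + ∑ J0 ∈ R'.powersetCard b, (f (T ∪ J0) - f T)
        ≤ ∑ J0 ∈ R'.powersetCard b, (f (T ∪ insert x J0) - f T) := by
      have h1 : ∑ J0 ∈ R'.powersetCard b, (D + (f (T ∪ J0) - f T))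
          ≤ ∑ J0 ∈ R'.powersetCard b, (f (T ∪ insert x J0) - f T) := by
        apply Finset.sum_le_sum
        intro J0 hJ0
        have := hDJ J0 (Finset.mem_powersetCard.mp hJ0).1
        linarith
      rw [Finset.sum_add_distrib, Finset.sum_const, nsmul_eq_mul,
        Finset.card_powersetCard] at h1
      linarith
    have hGsum : f (T ∪ insert x R') - f T = G' + D := by rw [hG'def, hDdef]; ring
    rw [hGsum]
    match b with
    | 0 =>
      have h1 := ih hdisj' 0
      simp only [Nat.choose_zero_right, Nat.cast_one, one_mul] at h1 hsum2 ⊢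
      linarith [hnnA 0]
    | (c+1) =>
      have h1 := ih hdisj' (c+1)
      have h2 := ih hdisj' c
      rcases Nat.eq_zero_or_pos R'.card with hr0 | hrpos
      · have hc0 : R'.card.choose (c+1) = 0 := by
          rw [hr0]; exact Nat.choose_eq_zero_of_lt (by omega)
        rw [hc0]
        push_cast
        have := hnnA (c+1+1)
        have := hnnB (c+1)
        linarith
      · obtain ⟨r0, hr0'⟩ : ∃ r0, R'.card = r0 + 1 :=
          ⟨R'.card - 1, (Nat.succ_pred_eq_of_pos hrpos).symm⟩
        have hpascal : (R'.card - 1).choose c + (R'.card - 1).choose (c+1)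
            = R'.card.choose (c+1) := by
          rw [hr0']
          simp only [Nat.add_sub_cancel]
          exact (Nat.choose_succ_succ r0 c).symm
        have hpc : ((R'.card - 1).choose c : ℝ) + ((R'.card - 1).choose (c+1) : ℝ)
            = (R'.card.choose (c+1) : ℝ) := by exact_mod_cast congrArg Nat.cast hpascal
        -- goal: choose R'.card (c+1) * (G' + D) ≤ Σ_{c+2} g + Σ_{c+1} (g ∘ insert x)
        nlinarith [h1, h2, hsum2, hD0, hG'0, hpc,
          (Nat.cast_nonneg ((R'.card - 1).choose c) : (0:ℝ) ≤ _),
          (Nat.cast_nonneg ((R'.card - 1).choose (c+1)) : (0:ℝ) ≤ _)]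

lemma key_step (f : Finset α → ℝ) (hmono : SetMonotone f) (hsub : SetSubmodular f)
    (T O : Finset α) (b K : ℕ) (hb : 0 < b) (hTK : T.card + b ≤ K) (hOK : O.card ≤ K)
    (hKX : K ≤ Fintype.card α) (ρ : ℝ)
    (hρ : ∀ J : Finset α, Disjoint J T → J.card = b → f (T ∪ J) - f T ≤ ρ) :
    (b : ℝ) * (f O - f T) ≤ (K : ℝ) * ρ := by
  have hcomp : b ≤ Tᶜ.card := by
    rw [Finset.card_compl]
    omega
  have hρ0 : 0 ≤ ρ := by
    obtain ⟨J, hJsub, hJcard⟩ := Finset.exists_subset_card_eq hcomp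
    have hdJ : Disjoint J T := by
      rw [Finset.disjoint_left]
      intro a ha
      exact Finset.mem_compl.mp (hJsub ha)
    have := hmono (Finset.subset_union_left (s₁ := T) (s₂ := J))
    linarith [hρ J hdJ hJcard]
  set R := O \ T with hRdef
  have hTR : T ∪ R = T ∪ O := Finset.union_sdiff_self_eq_union
  have hfO : f O ≤ f (T ∪ R) := by
    rw [hTR]; exact hmono Finset.subset_union_right
  have hdisjTR : Disjoint T R := Finset.disjoint_sdiff
  have hRK : R.card ≤ K := le_trans (Finset.card_le_card (Finset.sdiff_subset)) hOK
  have hRcomp : R ⊆ Tᶜ := by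
    intro a ha
    exact Finset.mem_compl.mpr (Finset.mem_sdiff.mp ha).2
  have hbK : (b : ℝ) ≤ (K : ℝ) := by exact_mod_cast le_trans (Nat.le_add_left b T.card) hTK
  by_cases hcase : R.card < b
  · obtain ⟨J, hRJ, hJc, hJcard⟩ :=
      Finset.exists_subsuperset_card_eq hRcomp (le_of_lt hcase) hcomp
    have hdJ : Disjoint J T := by
      rw [Finset.disjoint_left]
      intro a ha
      exact Finset.mem_compl.mp (hJc ha)
    have h1 : f (T ∪ R) ≤ f (T ∪ J) := hmono (Finset.union_subset_union_right hRJ)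
    have h2 : f O - f T ≤ ρ := by linarith [hρ J hdJ hJcard]
    calc (b : ℝ) * (f O - f T) ≤ (b : ℝ) * ρ :=
          mul_le_mul_of_nonneg_left h2 (Nat.cast_nonneg b)
      _ ≤ (K : ℝ) * ρ := mul_le_mul_of_nonneg_right hbK hρ0
  · push_neg at hcase
    have hA := cover_ineq f hmono hsub T R hdisjTR (b - 1)
    rw [Nat.sub_add_cancel hb] at hA
    have hsum : ∑ J ∈ R.powersetCard b, (f (T ∪ J) - f T) ≤ (R.card.choose b : ℝ) * ρ := by
      rw [← Finset.card_powersetCard b R, ← nsmul_eq_mul]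
      apply Finset.sum_le_card_nsmul
      intro J hJ
      obtain ⟨hJR, hJb⟩ := Finset.mem_powersetCard.mp hJ
      have hdJ : Disjoint J T := by
        rw [Finset.disjoint_left]
        intro a ha
        exact Finset.mem_compl.mp (hRcomp (hJR ha))
      exact hρ J hdJ hJb
    have hA2 : ((R.card - 1).choose (b - 1) : ℝ) * (f (T ∪ R) - f T)
        ≤ (R.card.choose b : ℝ) * ρ := le_trans hA hsum
    have hid : b * (R.card.choose b) = R.card * ((R.card - 1).choose (b - 1)) := by
      obtain ⟨r0, hr0⟩ : ∃ r0, R.card = r0 + 1 := ⟨R.card - 1, by omega⟩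
      obtain ⟨b0, hb0⟩ : ∃ b0, b = b0 + 1 := ⟨b - 1, by omega⟩
      rw [hr0, hb0]
      simp only [Nat.add_sub_cancel]
      have h := Nat.add_one_mul_choose_eq r0 b0
      linarith
    have hpos : (0 : ℝ) < ((R.card - 1).choose (b - 1) : ℝ) := by
      have : 0 < (R.card - 1).choose (b - 1) := Nat.choose_pos (by omega)
      exact_mod_cast this
    have hG0 : 0 ≤ f (T ∪ R) - f T := by
      have := hmono (Finset.subset_union_left (s₁ := T) (s₂ := R))
      linarith
    -- multiply hA2 by b and use the identity
    have h3 : (b : ℝ) * (((R.card - 1).choose (b - 1) : ℝ) * (f (T ∪ R) - f T))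
        ≤ (b : ℝ) * ((R.card.choose b : ℝ) * ρ) :=
      mul_le_mul_of_nonneg_left hA2 (Nat.cast_nonneg b)
    have hidR : (b : ℝ) * (R.card.choose b : ℝ)
        = (R.card : ℝ) * ((R.card - 1).choose (b - 1) : ℝ) := by exact_mod_cast hid
    have h4 : (b : ℝ) * ((R.card.choose b : ℝ) * ρ)
        ≤ (K : ℝ) * (((R.card - 1).choose (b - 1) : ℝ) * ρ) := by
      have hrK : (R.card : ℝ) ≤ (K : ℝ) := by exact_mod_cast hRK
      calc (b : ℝ) * ((R.card.choose b : ℝ) * ρ)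
          = ((R.card : ℝ) * ((R.card - 1).choose (b - 1) : ℝ)) * ρ := by
            rw [← mul_assoc, hidR]
        _ ≤ ((K : ℝ) * ((R.card - 1).choose (b - 1) : ℝ)) * ρ := by
            apply mul_le_mul_of_nonneg_right _ hρ0
            exact mul_le_mul_of_nonneg_right hrK (le_of_lt hpos)
        _ = (K : ℝ) * (((R.card - 1).choose (b - 1) : ℝ) * ρ) := by ring
    have h5 : ((R.card - 1).choose (b - 1) : ℝ) * ((b : ℝ) * (f (T ∪ R) - f T))
        ≤ ((R.card - 1).choose (b - 1) : ℝ) * ((K : ℝ) * ρ) := by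
      calc ((R.card - 1).choose (b - 1) : ℝ) * ((b : ℝ) * (f (T ∪ R) - f T))
          = (b : ℝ) * (((R.card - 1).choose (b - 1) : ℝ) * (f (T ∪ R) - f T)) := by ring
        _ ≤ (b : ℝ) * ((R.card.choose b : ℝ) * ρ) := h3
        _ ≤ (K : ℝ) * (((R.card - 1).choose (b - 1) : ℝ) * ρ) := h4
        _ = ((R.card - 1).choose (b - 1) : ℝ) * ((K : ℝ) * ρ) := by ring
    have h6 : (b : ℝ) * (f (T ∪ R) - f T) ≤ (K : ℝ) * ρ :=
      (mul_le_mul_iff_right₀ hpos).mp h5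
    have h7 : (b : ℝ) * (f O - f T) ≤ (b : ℝ) * (f (T ∪ R) - f T) :=
      mul_le_mul_of_nonneg_left (by linarith) (Nat.cast_nonneg b)
    linarith


set_option maxHeartbeats 1000000 in
/-- Bound for the `k`-batch greedy strategy under a uniform matroid of rank
`K = k(l-1) + m`. -/
theorem batch_greedy_bound_uniform_matroid {α : Type*} [DecidableEq α] [Fintype α]
    (k l m K : ℕ) (hl : 0 < l) (hm : 0 < m) (hmk : m ≤ k)
    (hK : K = k * (l - 1) + m) (hKcard : K ≤ Fintype.card α)
    (f : Finset α → ℝ) (hf : PolymatroidFn f)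
    (S O : Finset α)
    (hS : IsBatchGreedy (fun T : Finset α => T.card ≤ K) f k l m S)
    (hO : IsOptimal (fun T : Finset α => T.card ≤ K) f O) :
    f S ≥ (1 - (1 - (m : ℝ) / ((k : ℝ) * (l : ℝ))) * (1 - 1 / (l : ℝ)) ^ (l - 1)) * f O := by
  obtain ⟨l0, rfl⟩ : ∃ l0, l = l0 + 1 := ⟨l - 1, by omega⟩
  simp only [Nat.add_sub_cancel] at hK ⊢
  obtain ⟨T, hT0, hTstep, hTlast⟩ := hS
  simp only [Nat.add_sub_cancel] at hTstep hTlast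
  obtain ⟨hOcard, hOopt⟩ := hO
  obtain ⟨hmono, hsub, hempty⟩ := hf
  have hk : 0 < k := lt_of_lt_of_le hm hmk
  have hfO0 : 0 ≤ f O := by
    have := hmono (Finset.empty_subset O)
    linarith
  have hKm : m ≤ K := by omega
  have hKpos : (0 : ℝ) < (K : ℝ) := by exact_mod_cast lt_of_lt_of_le hm hKm
  have hLpos : (0 : ℝ) < (l0 : ℝ) + 1 := by positivity
  have h1L : 0 ≤ 1 - 1 / ((l0 : ℝ) + 1) := by
    have : 1 / ((l0 : ℝ) + 1) ≤ 1 := by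
      rw [div_le_one hLpos]
      have : (0:ℝ) ≤ (l0:ℝ) := Nat.cast_nonneg l0
      linarith
    linarith
  have hKkl : K ≤ k * (l0 + 1) := by
    have : k * l0 + m ≤ k * l0 + k := by omega
    calc K = k * l0 + m := hK
      _ ≤ k * l0 + k := by omega
      _ = k * (l0 + 1) := by ring
  have hKklR : (K : ℝ) ≤ (k : ℝ) * ((l0 : ℝ) + 1) := by
    have := (Nat.cast_le (α := ℝ)).mpr hKkl
    push_cast at this
    linarith
  have main : ∀ t, t ≤ l0 → (T t).card = k * t ∧
      f O - f (T t) ≤ (1 - 1 / ((l0 : ℝ) + 1)) ^ t * f O := by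
    intro t
    induction t with
    | zero =>
      intro _
      constructor
      · simp [hT0]
      · simp [hT0, hempty]
    | succ t ih =>
      intro ht
      obtain ⟨hc, hΔ⟩ := ih (by omega)
      obtain ⟨J, hdJ, hcJ, hIJ, hTe, hmax⟩ := hTstep t (by omega)
      have hcard1 : (T (t+1)).card = k * (t+1) := by
        rw [hTe, Finset.card_union_of_disjoint hdJ.symm, hc, hcJ]
        ring
      have hTKb : (T t).card + k ≤ K := by
        rw [hc]
        have h1 : k * t + k = k * (t + 1) := by ring
        have h2 : k * (t + 1) ≤ k * l0 := Nat.mul_le_mul_left k (by omega)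
        omega
      have hρ : ∀ J' : Finset α, Disjoint J' (T t) → J'.card = k →
          f (T t ∪ J') - f (T t) ≤ f (T (t+1)) - f (T t) := by
        intro J' hd hcard'
        have hfeas : (T t ∪ J').card ≤ K :=
          le_trans (Finset.card_union_le _ _) (by rw [hcard']; exact hTKb)
        have := hmax J' hd hcard' hfeas
        rw [hTe]
        linarith
      have hkey := key_step f hmono hsub (T t) O k K hk hTKb hOcard hKcard
        (f (T (t+1)) - f (T t)) hρ
      have hΔ0 : 0 ≤ f O - f (T t) := by
        have hTtK : (T t).card ≤ K := by omega
        linarith [hOopt (T t) hTtK]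
      have hdiv : f O - f (T (t+1)) ≤ ((K : ℝ) - (k : ℝ)) / (K : ℝ) * (f O - f (T t)) := by
        rw [div_mul_eq_mul_div, le_div_iff₀ hKpos]
        linarith [hkey]
      have h9 : (K : ℝ) / ((l0 : ℝ) + 1) ≤ (k : ℝ) := by
        rw [div_le_iff₀ hLpos]
        linarith
      have hfrac : ((K : ℝ) - (k : ℝ)) / (K : ℝ) ≤ 1 - 1 / ((l0 : ℝ) + 1) := by
        rw [div_le_iff₀ hKpos]
        have e1 : (1 - 1 / ((l0 : ℝ) + 1)) * (K : ℝ)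
            = (K : ℝ) - (K : ℝ) / ((l0 : ℝ) + 1) := by
          field_simp
        rw [e1]
        linarith
      have hΔ1 : f O - f (T (t+1)) ≤ (1 - 1 / ((l0 : ℝ) + 1)) * (f O - f (T t)) :=
        le_trans hdiv (mul_le_mul_of_nonneg_right hfrac hΔ0)
      refine ⟨hcard1, ?_⟩
      rw [pow_succ]
      have h10 : (1 - 1 / ((l0 : ℝ) + 1)) * (f O - f (T t))
          ≤ (1 - 1 / ((l0 : ℝ) + 1)) * ((1 - 1 / ((l0 : ℝ) + 1)) ^ t * f O) :=
        mul_le_mul_of_nonneg_left hΔ h1L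
      linarith [hΔ1, h10]
  obtain ⟨J, hdJ, hcJ, hIJ, hSe, hmax⟩ := hTlast
  obtain ⟨hcT, hΔ⟩ := main l0 le_rfl
  have hρ : ∀ J' : Finset α, Disjoint J' (T l0) → J'.card = m →
      f (T l0 ∪ J') - f (T l0) ≤ f S - f (T l0) := by
    intro J' hd hcard'
    have hfeas : (T l0 ∪ J').card ≤ K :=
      le_trans (Finset.card_union_le _ _) (by rw [hcT, hcard']; omega)
    have := hmax J' hd hcard' hfeas
    rw [hSe]
    linarith
  have hkey := key_step f hmono hsub (T l0) O m K hm (by rw [hcT]; omega) hOcard hKcard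
    (f S - f (T l0)) hρ
  have hΔ0 : 0 ≤ f O - f (T l0) := by
    have hTtK : (T l0).card ≤ K := by rw [hcT]; omega
    linarith [hOopt (T l0) hTtK]
  have hdiv : f O - f S ≤ ((K : ℝ) - (m : ℝ)) / (K : ℝ) * (f O - f (T l0)) := by
    rw [div_mul_eq_mul_div, le_div_iff₀ hKpos]
    linarith [hkey]
  have hklpos : (0 : ℝ) < (k : ℝ) * ((l0 : ℝ) + 1) := by positivity
  have hmK : (m : ℝ) ≤ (K : ℝ) := by exact_mod_cast hKm
  have hfrac : ((K : ℝ) - (m : ℝ)) / (K : ℝ)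
      ≤ 1 - (m : ℝ) / ((k : ℝ) * ((l0 : ℝ) + 1)) := by
    have h1 : (m : ℝ) / ((k : ℝ) * ((l0 : ℝ) + 1)) ≤ (m : ℝ) / (K : ℝ) :=
      div_le_div_of_nonneg_left (Nat.cast_nonneg m) hKpos hKklR
    have e1 : ((K : ℝ) - (m : ℝ)) / (K : ℝ) = 1 - (m : ℝ) / (K : ℝ) := by
      field_simp
    rw [e1]
    linarith
  have hQ0 : 0 ≤ 1 - (m : ℝ) / ((k : ℝ) * ((l0 : ℝ) + 1)) := by
    have hmkl : (m : ℝ) ≤ (k : ℝ) * ((l0 : ℝ) + 1) := by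
      have h1 : (m : ℝ) ≤ (k : ℝ) := by exact_mod_cast hmk
      have h2 : (1:ℝ) ≤ (l0 : ℝ) + 1 := by linarith [(Nat.cast_nonneg l0 : (0:ℝ) ≤ _)]
      have h3 : (k : ℝ) ≤ (k : ℝ) * ((l0 : ℝ) + 1) :=
        le_mul_of_one_le_right (Nat.cast_nonneg k) h2
      linarith
    have : (m : ℝ) / ((k : ℝ) * ((l0 : ℝ) + 1)) ≤ 1 := by
      rw [div_le_one hklpos]; exact hmkl
    linarith
  have hchain : f O - f S ≤ (1 - (m : ℝ) / ((k : ℝ) * ((l0 : ℝ) + 1)))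
      * ((1 - 1 / ((l0 : ℝ) + 1)) ^ l0 * f O) := by
    have h2 := mul_le_mul_of_nonneg_right hfrac hΔ0
    have h3 := mul_le_mul_of_nonneg_left hΔ hQ0
    linarith
  push_cast
  linarith [hchain]
end

section
/- Let (X, 𝓘) be a matroid whose rank K satisfies K = k(l−1) + m with l, m positive integers and 0 < m ≤ k, and let f : 2^X → ℝ be a polymatroid set function with f(I) > 0 for some k-element I ⊆ X. Then every k-batch greedy solution S and every optimal solution O satisfy (1 + c_k) · f(S) ≥ f(O), where c_k is the total k-batch curvature of f. -/
open Finset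

variable {α : Type*} [DecidableEq α] [Fintype α]

set_option linter.unusedSectionVars false
set_option linter.unusedVariables false

private lemma submod_sets {f : Finset α → ℝ} (hsub : SetSubmodular f) :
    ∀ (T A B : Finset α), A ⊆ B → Disjoint T B →
      f (B ∪ T) - f B ≤ f (A ∪ T) - f A := by
  intro T
  induction T using Finset.induction_on with
  | empty => intro A B _ _; simp
  | @insert a T' ha ih =>
      intro A B hAB hdis
      have hdisT' : Disjoint T' B :=
        Finset.disjoint_of_subset_left (Finset.subset_insert a T') hdis
      have haB : a ∉ B ∪ T' := by
        simp only [Finset.mem_union]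
        rintro (h | h)
        · exact (Finset.disjoint_left.mp hdis (Finset.mem_insert_self a T')) h
        · exact ha h
      have hsubAB : A ∪ T' ⊆ B ∪ T' := Finset.union_subset_union hAB (Finset.Subset.refl _)
      have h1 := hsub hsubAB a haB
      have h2 := ih A B hAB hdisT'
      have e1 : B ∪ insert a T' = insert a (B ∪ T') := by rw [Finset.union_insert]
      have e2 : A ∪ insert a T' = insert a (A ∪ T') := by rw [Finset.union_insert]
      rw [e1, e2]
      linarith

private lemma indep_extend {I : Finset α → Prop}
    (hher : Hereditary I) (haug : Augmentation I) :
    ∀ (n : ℕ) (A B : Finset α), I A → I B → A.card ≤ B.card → B.card - A.card = n →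
      ∃ A', I A' ∧ A ⊆ A' ∧ A' ⊆ A ∪ B ∧ A'.card = B.card := by
  intro n
  induction n with
  | zero =>
      intro A B hA _ hle hn
      exact ⟨A, hA, Finset.Subset.refl A, Finset.subset_union_left, by omega⟩
  | succ n ih =>
      intro A B hA hB hle hn
      have hlt : A.card < B.card := by omega
      obtain ⟨j, hjB, hjA, hins⟩ := haug hA hB hlt
      have hcard : (insert j A).card = A.card + 1 := Finset.card_insert_of_notMem hjA
      obtain ⟨A', h1, h2, h3, h4⟩ := ih (insert j A) B hins hB (by omega) (by omega)
      refine ⟨A', h1, (Finset.subset_insert j A).trans h2, ?_, h4⟩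
      intro x hx
      rcases Finset.mem_union.mp (h3 hx) with h | h
      · rcases Finset.mem_insert.mp h with h' | h'
        · exact Finset.mem_union.mpr (Or.inr (h' ▸ hjB))
        · exact Finset.mem_union.mpr (Or.inl h')
      · exact Finset.mem_union.mpr (Or.inr h)

private lemma exists_basis_superset {I : Finset α → Prop}
    (hher : Hereditary I) (A : Finset α) (hA : I A) :
    ∃ B, I B ∧ A ⊆ B ∧ ∀ a ∉ B, ¬ I (insert a B) := by
  classical
  let s : Finset (Finset α) := Finset.univ.filter (fun C => A ⊆ C ∧ I C)
  have hs : s.Nonempty := ⟨A, by simp [s, hA]⟩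
  obtain ⟨B, hBs, hBmax⟩ := Finset.exists_max_image s Finset.card hs
  have hB : A ⊆ B ∧ I B := by simpa [s] using hBs
  refine ⟨B, hB.2, hB.1, ?_⟩
  intro a ha hins
  have hmem : insert a B ∈ s := by
    simp only [s, Finset.mem_filter, Finset.mem_univ, true_and]
    exact ⟨hB.1.trans (Finset.subset_insert a B), hins⟩
  have := hBmax _ hmem
  rw [Finset.card_insert_of_notMem ha] at this
  omega


set_option maxHeartbeats 1000000 in
/-- Batch-curvature bound for the `k`-batch greedy strategy under a general
matroid of rank `K = k(l-1) + m`: `(1 + c_k) · f(S) ≥ f(O)`. -/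
theorem batch_greedy_curvature_bound_matroid {α : Type*} [DecidableEq α] [Fintype α]
    (I : Finset α → Prop) (hI : IsMatroid I)
    (k l m K : ℕ) (hl : 0 < l) (hm : 0 < m) (hmk : m ≤ k)
    (hK : K = k * (l - 1) + m)
    (hrank : ∀ B : Finset α, I B → (∀ a ∉ B, ¬ I (insert a B)) → B.card = K)
    (f : Finset α → ℝ) (hf : PolymatroidFn f)
    (hpos : ∃ J : Finset α, J.card = k ∧ 0 < f J)
    (S O : Finset α)
    (hS : IsBatchGreedy I f k l m S)
    (hO : IsOptimal I f O) :
    (1 + batchCurvature f k) * f S ≥ f O := by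
  classical
  obtain ⟨hmono, hsub, hemp⟩ := hf
  obtain ⟨⟨hne, hher⟩, haug⟩ := hI
  obtain ⟨T, hT0, hTstep, hTlast⟩ := hS
  obtain ⟨hIO, hOopt⟩ := hO
  set c := batchCurvature f k with hcdef
  set Cset : Set ℝ := {x : ℝ | ∃ J : Finset α, J.card = k ∧ f J ≠ f ∅ ∧
    x = 1 - (f Finset.univ - f (Finset.univ \ J)) / (f J - f ∅)} with hCset
  have hceq : c = sSup Cset := rfl
  have fnonneg : ∀ A : Finset α, 0 ≤ f A := by
    intro A
    have := hmono (Finset.empty_subset A)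
    linarith [this, hemp.le, hemp.ge]
  -- boundedness of curvature set
  have hbdd : BddAbove Cset := by
    refine ⟨1, ?_⟩
    rintro x ⟨J, hJk, hJne, rfl⟩
    have hb : 0 < f J - f ∅ := by
      have h1 : f ∅ ≤ f J := hmono (Finset.empty_subset J)
      cases' lt_or_eq_of_le h1 with h h
      · linarith
      · exact absurd h.symm hJne
    have ha : 0 ≤ f Finset.univ - f (Finset.univ \ J) := by
      have := hmono (Finset.sdiff_subset (s := Finset.univ) (t := J))
      linarith
    have : 0 ≤ (f Finset.univ - f (Finset.univ \ J)) / (f J - f ∅) := div_nonneg ha hb.le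
    linarith
  obtain ⟨J₀, hJ₀k, hJ₀pos⟩ := hpos
  have hJ₀ne : f J₀ ≠ f ∅ := by rw [hemp]; exact ne_of_gt hJ₀pos
  have hmem₀ : (1 - (f Finset.univ - f (Finset.univ \ J₀)) / (f J₀ - f ∅)) ∈ Cset :=
    ⟨J₀, hJ₀k, hJ₀ne, rfl⟩
  have hc0 : 0 ≤ c := by
    have hx0 : (0:ℝ) ≤ 1 - (f Finset.univ - f (Finset.univ \ J₀)) / (f J₀ - f ∅) := by
      have hsub0 := submod_sets hsub J₀ ∅ (Finset.univ \ J₀) (Finset.empty_subset _)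
        (Finset.sdiff_disjoint.symm)
      have e1 : Finset.univ \ J₀ ∪ J₀ = Finset.univ := by
        rw [Finset.sdiff_union_self_eq_union]
        exact Finset.union_eq_left.mpr (Finset.subset_univ J₀)
      have e2 : (∅ : Finset α) ∪ J₀ = J₀ := Finset.empty_union J₀
      rw [e1, e2] at hsub0
      have hb : 0 < f J₀ - f ∅ := by rw [hemp]; linarith
      have : (f Finset.univ - f (Finset.univ \ J₀)) / (f J₀ - f ∅) ≤ 1 := by
        rw [div_le_one hb]; linarith
      linarith
    calc (0:ℝ) ≤ _ := hx0
      _ ≤ c := le_csSup hbdd hmem₀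
  have hc1 : c ≤ 1 := csSup_le ⟨_, hmem₀⟩ (by
    rintro x ⟨J, hJk, hJne, rfl⟩
    have hb : 0 < f J - f ∅ := by
      have h1 : f ∅ ≤ f J := hmono (Finset.empty_subset J)
      cases' lt_or_eq_of_le h1 with h h
      · linarith
      · exact absurd h.symm hJne
    have ha : 0 ≤ f Finset.univ - f (Finset.univ \ J) := by
      have := hmono (Finset.sdiff_subset (s := Finset.univ) (t := J))
      linarith
    have : 0 ≤ (f Finset.univ - f (Finset.univ \ J)) / (f J - f ∅) := div_nonneg ha hb.le
    linarith)
  have curv_ge : ∀ Jt : Finset α, Jt.card = k →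
      (1 - c) * f Jt ≤ f Finset.univ - f (Finset.univ \ Jt) := by
    intro Jt hk
    by_cases h0 : f Jt = 0
    · rw [h0, mul_zero]
      have := hmono (Finset.sdiff_subset (s := Finset.univ) (t := Jt))
      linarith
    · have hbpos : 0 < f Jt := lt_of_le_of_ne (fnonneg Jt) (Ne.symm h0)
      have hmem : (1 - (f Finset.univ - f (Finset.univ \ Jt)) / (f Jt - f ∅)) ∈ Cset :=
        ⟨Jt, hk, by rw [hemp]; exact h0, rfl⟩
      have hle := le_csSup hbdd hmem
      rw [hemp, sub_zero] at hle
      have h2 : (1 - c) ≤ (f Finset.univ - f (Finset.univ \ Jt)) / f Jt := by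
        rw [← hceq] at hle; linarith
      calc (1 - c) * f Jt ≤ ((f Finset.univ - f (Finset.univ \ Jt)) / f Jt) * f Jt :=
            mul_le_mul_of_nonneg_right h2 hbpos.le
        _ = f Finset.univ - f (Finset.univ \ Jt) := div_mul_cancel₀ _ (ne_of_gt hbpos)
  -- greedy batch structure
  obtain ⟨Jl, hJldis, hJlcard, hJlind, hJleq, hJlmax⟩ := hTlast
  set Jf : ℕ → Finset α := fun s => T (s+1) \ T s with hJf
  have hstep : ∀ t, t < l - 1 →
      T t ⊆ T (t+1) ∧ Disjoint (Jf t) (T t) ∧ (Jf t).card = k ∧ T (t+1) = T t ∪ Jf t ∧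
      (∀ J' : Finset α, Disjoint J' (T t) → J'.card = k → I (T t ∪ J') →
        f (T t ∪ J') ≤ f (T (t+1))) := by
    intro t ht
    obtain ⟨Jb, hdis, hcard, hind, heq, hmax⟩ := hTstep t ht
    have hJfb : Jf t = Jb := by
      simp only [hJf]
      rw [heq, Finset.union_sdiff_cancel_left hdis.symm]
    have hsub1 : T t ⊆ T (t+1) := by rw [heq]; exact Finset.subset_union_left
    refine ⟨hsub1, hJfb ▸ hdis, hJfb ▸ hcard, by rw [heq, hJfb], ?_⟩
    intro J' h1 h2 h3
    have := hmax J' h1 h2 h3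
    rw [heq]
    exact this
  have hTfacts : ∀ t, t ≤ l - 1 → I (T t) ∧ (T t).card = k * t := by
    intro t
    induction t with
    | zero =>
        intro _
        obtain ⟨S₀, hS₀⟩ := hne
        constructor
        · rw [hT0]; exact hher hS₀ (Finset.empty_subset _)
        · rw [hT0]; simp
    | succ t iht =>
        intro hle
        have ht : t < l - 1 := by omega
        obtain ⟨hsub1, hdisJ, hcardJ, heqJ, _⟩ := hstep t ht
        obtain ⟨hIt, hct⟩ := iht (by omega)
        constructor
        · obtain ⟨Jb, hdis, hcard, hind, heq, _⟩ := hTstep t ht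
          rw [heq]; exact hind
        · rw [heqJ, Finset.card_union_of_disjoint hdisJ.symm, hct, hcardJ]
          ring
  have hTS : ∀ t, t ≤ l - 1 → T t ⊆ S := by
    have haux : ∀ d t, t + d ≤ l - 1 → T t ⊆ T (t + d) := by
      intro d
      induction d with
      | zero => intro t _; simp
      | succ d ihd =>
          intro t hle
          have h1 : T t ⊆ T (t + d) := ihd t (by omega)
          have h2 : T (t + d) ⊆ T (t + d + 1) := (hstep (t + d) (by omega)).1
          exact h1.trans h2
    intro t ht
    have h1 : T t ⊆ T (l - 1) := by
      have := haux (l - 1 - t) t (by omega)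
      have e : t + (l - 1 - t) = l - 1 := by omega
      rwa [e] at this
    have h2 : T (l - 1) ⊆ S := by rw [hJleq]; exact Finset.subset_union_left
    exact h1.trans h2
  have hIS : I S := by rw [hJleq]; exact hJlind
  -- the basis extension of O
  obtain ⟨Ostar, hIOs, hOsub, hOsmax⟩ := exists_basis_superset hher O hIO
  have hOscard : Ostar.card = K := hrank Ostar hIOs hOsmax
  set γf : ℕ → ℝ := fun s => f (T s ∪ (Jf s ∩ Ostar)) - f (T s) with hγf
  -- DESC
  have desc : ∀ t, t ≤ l - 1 →
      f Ostar + (1 - c) * f (T t) ≤ f (Ostar ∪ T t) + ∑ s ∈ Finset.range t, γf s := by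
    intro t
    induction t with
    | zero =>
        intro _
        rw [hT0]
        simp [hemp]
    | succ t ih =>
        intro hle
        have ht : t < l - 1 := by omega
        obtain ⟨hsub1, hdisJ, hcardJ, heqJ, _⟩ := hstep t ht
        have ihh := ih (by omega)
        set Jt := Jf t with hJt
        set Ct := Jt ∩ Ostar with hCt
        set Et := Jt \ Ostar with hEt
        have hTt1 : Ostar ∪ T (t+1) = (Ostar ∪ T t) ∪ Et := by
          rw [heqJ]
          ext x
          simp only [Finset.mem_union, Finset.mem_sdiff, hEt]
          tauto
        have hB1 : (Finset.univ \ Jt) ∪ Ct = Finset.univ \ Et := by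
          ext x
          simp only [Finset.mem_union, Finset.mem_sdiff, Finset.mem_univ, true_and,
            Finset.mem_inter, hCt, hEt]
          tauto
        have hB2 : (Finset.univ \ Et) ∪ Et = Finset.univ := by
          rw [Finset.sdiff_union_self_eq_union]
          exact Finset.union_eq_left.mpr (Finset.subset_univ Et)
        have key3 : f Finset.univ - f (Finset.univ \ Et) ≤
            f (Ostar ∪ T (t+1)) - f (Ostar ∪ T t) := by
          have hss : Ostar ∪ T t ⊆ Finset.univ \ Et := by
            intro x hx
            simp only [Finset.mem_sdiff, Finset.mem_univ, true_and, hEt]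
            intro hxE
            rcases Finset.mem_union.mp hx with h | h
            · exact hxE.2 h
            · exact Finset.disjoint_left.mp hdisJ hxE.1 h
          have := submod_sets hsub Et (Ostar ∪ T t) (Finset.univ \ Et) hss
            Finset.sdiff_disjoint.symm
          rw [hB2, ← hTt1] at this
          exact this
        have key2 : f (Finset.univ \ Et) - f (Finset.univ \ Jt) ≤ γf t := by
          have hss : T t ⊆ Finset.univ \ Jt := by
            intro x hx
            simp only [Finset.mem_sdiff, Finset.mem_univ, true_and]
            exact fun hxJ => Finset.disjoint_left.mp hdisJ hxJ hx
          have hdisC : Disjoint Ct (Finset.univ \ Jt) := by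
            refine Finset.disjoint_of_subset_left (Finset.inter_subset_left) ?_
            exact Finset.sdiff_disjoint.symm
          have := submod_sets hsub Ct (T t) (Finset.univ \ Jt) hss hdisC
          rw [hB1] at this
          simp only [hγf]
          exact this
        have key1 : (1 - c) * f Jt ≤ f Finset.univ - f (Finset.univ \ Jt) :=
          curv_ge Jt hcardJ
        have key4 : f (T (t+1)) - f (T t) ≤ f Jt := by
          have hdis' : Disjoint Jt (T t) := hdisJ
          have := submod_sets hsub Jt ∅ (T t) (Finset.empty_subset _) hdis'
          rw [Finset.empty_union, ← heqJ, hemp] at this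
          linarith
        have key5 : (1 - c) * (f (T (t+1)) - f (T t)) ≤ (1 - c) * f Jt :=
          mul_le_mul_of_nonneg_left key4 (by linarith)
        rw [Finset.sum_range_succ]
        have expand : (1 - c) * f (T (t+1)) =
            (1 - c) * f (T t) + (1 - c) * (f (T (t+1)) - f (T t)) := by ring
        linarith
  -- CLIMB with built-in exchange-partition construction (downward recursion)
  have CL : ∀ t, t ≤ l - 1 → ∀ R M : Finset α, R ⊆ Ostar →
      (∀ x ∈ R, x ∈ S → x ∈ T t) → (∀ x ∈ Ostar, x ∈ T t → x ∈ R) →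
      R.card = (T t).card → T (t) ⊆ M → Disjoint (R \ S) M →
      f (M ∪ (R \ S)) ≤ f M +
        ∑ s ∈ Finset.range t, ((f (T (s+1)) - f (T s)) - γf s) := by
    intro t
    induction t with
    | zero =>
        intro _ R M _ _ _ hcard _ _
        rw [hT0, Finset.card_empty, Finset.card_eq_zero] at hcard
        rw [hcard]
        simp
    | succ t ih =>
        intro hle R M hRO hRS hOT hcard hTM hdisM
        have ht : t < l - 1 := by omega
        obtain ⟨hsub1, hdisJ, hcardJ, heqJ, hmaxJ⟩ := hstep t ht
        have hIt1 : I (T (t+1)) := (hTfacts (t+1) hle).1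
        have hTc1 : (T (t+1)).card = (T t).card + k := by
          rw [heqJ, Finset.card_union_of_disjoint hdisJ.symm, hcardJ]
        set Jt := Jf t with hJt
        set Ct := Jt ∩ Ostar with hCt
        have hCtJ : Ct ⊆ Jt := Finset.inter_subset_left
        have hJtT1 : Jt ⊆ T (t+1) := by
          rw [heqJ]; exact Finset.subset_union_right
        have hCtR : Ct ⊆ R := by
          intro x hx
          obtain ⟨hxJ, hxO⟩ := Finset.mem_inter.mp hx
          exact hOT x hxO (hJtT1 hxJ)
        have hdisTC : Disjoint (T t) Ct := by
          refine Finset.disjoint_of_subset_right hCtJ ?_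
          exact hdisJ.symm
        have hIA : I (T t ∪ Ct) := by
          refine hher hIt1 ?_
          exact Finset.union_subset (hsub1) (hCtJ.trans hJtT1)
        have hIR : I R := hher hIOs hRO
        have hcardA : (T t ∪ Ct).card = (T t).card + Ct.card :=
          Finset.card_union_of_disjoint hdisTC
        have hcardle : (T t ∪ Ct).card ≤ R.card := by
          have h1 : Ct.card ≤ k := by
            calc Ct.card ≤ Jt.card := Finset.card_le_card hCtJ
              _ = k := hcardJ
          rw [hcard, hcardA, hTc1]
          omega
        obtain ⟨A', hIA', hAA', hA'sub, hA'card⟩ :=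
          indep_extend hher haug _ (T t ∪ Ct) R hIA hIR hcardle rfl
        set Ob := A' \ T t with hOb
        have hTA' : T t ⊆ A' := (Finset.subset_union_left).trans hAA'
        have hObcard : Ob.card = k := by
          rw [hOb, Finset.card_sdiff_of_subset hTA', hA'card, hcard, hTc1]
          omega
        have hObdis : Disjoint Ob (T t) := Finset.sdiff_disjoint
        have hTOb : T t ∪ Ob = A' := Finset.union_sdiff_of_subset hTA'
        have hgreedy : f A' ≤ f (T (t+1)) := by
          have := hmaxJ Ob hObdis hObcard (by rw [hTOb]; exact hIA')
          rwa [hTOb] at this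
        have hObR : Ob ⊆ R := by
          intro x hx
          obtain ⟨hxA', hxT⟩ := Finset.mem_sdiff.mp hx
          rcases Finset.mem_union.mp (hA'sub hxA') with h | h
          · rcases Finset.mem_union.mp h with h' | h'
            · exact absurd h' hxT
            · exact hCtR h'
          · exact h
        have hCtOb : Ct ⊆ Ob := by
          intro x hx
          refine Finset.mem_sdiff.mpr ⟨hAA' (Finset.mem_union_right _ hx), ?_⟩
          exact fun hxT => Finset.disjoint_left.mp hdisTC.symm hx hxT
        have hObS : ∀ x ∈ Ob, x ∈ S → x ∈ Ct := by
          intro x hx hxS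
          obtain ⟨hxA', hxT⟩ := Finset.mem_sdiff.mp hx
          rcases Finset.mem_union.mp (hA'sub hxA') with h | h
          · rcases Finset.mem_union.mp h with h' | h'
            · exact absurd h' hxT
            · exact h'
          · have hxT1 := hRS x h hxS
            have hxJ : x ∈ Jt := by
              rw [hJt, hJf]
              exact Finset.mem_sdiff.mpr ⟨hxT1, hxT⟩
            exact Finset.mem_inter.mpr ⟨hxJ, hRO h⟩
        set R' := R \ Ob with hR'
        have hR'O : R' ⊆ Ostar := (Finset.sdiff_subset).trans hRO
        have hR'S : ∀ x ∈ R', x ∈ S → x ∈ T t := by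
          intro x hx hxS
          obtain ⟨hxR, hxOb⟩ := Finset.mem_sdiff.mp hx
          have hxT1 := hRS x hxR hxS
          by_contra hxT
          have hxJ : x ∈ Jt := by
            rw [hJt, hJf]
            exact Finset.mem_sdiff.mpr ⟨hxT1, hxT⟩
          exact hxOb (hCtOb (Finset.mem_inter.mpr ⟨hxJ, hRO hxR⟩))
        have hOT' : ∀ x ∈ Ostar, x ∈ T t → x ∈ R' := by
          intro x hxO hxT
          refine Finset.mem_sdiff.mpr ⟨hOT x hxO (hsub1 hxT), ?_⟩
          exact fun hxOb => Finset.disjoint_left.mp hObdis hxOb hxT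
        have hR'card : R'.card = (T t).card := by
          rw [hR', Finset.card_sdiff_of_subset hObR, hcard, hTc1, hObcard]
          omega
        have hTM' : T t ⊆ M := hsub1.trans hTM
        have hdisM' : Disjoint (R' \ S) M := by
          refine Finset.disjoint_of_subset_left ?_ hdisM
          exact Finset.sdiff_subset_sdiff Finset.sdiff_subset (Finset.Subset.refl _)
        have IH := ih (by omega) R' M hR'O hR'S hOT' hR'card hTM' hdisM'
        set Db := Ob \ S with hDb
        have hsplit : R \ S = (R' \ S) ∪ Db := by
          ext x
          simp only [Finset.mem_sdiff, Finset.mem_union, hR', hDb]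
          constructor
          · intro ⟨hxR, hxS⟩
            by_cases hOb' : x ∈ Ob
            · exact Or.inr ⟨hOb', hxS⟩
            · exact Or.inl ⟨⟨hxR, hOb'⟩, hxS⟩
          · rintro (⟨⟨hxR, _⟩, hxS⟩ | ⟨hxOb, hxS⟩)
            · exact ⟨hxR, hxS⟩
            · exact ⟨hObR hxOb, hxS⟩
        have hMun : M ∪ (R \ S) = (M ∪ (R' \ S)) ∪ Db := by
          rw [hsplit, Finset.union_assoc]
        have hABase : T t ∪ Ct ⊆ M ∪ (R' \ S) := by
          intro x hx
          refine Finset.mem_union_left _ ?_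
          rcases Finset.mem_union.mp hx with h | h
          · exact hTM' h
          · exact hTM (hJtT1 (hCtJ h))
        have hDbdis : Disjoint Db (M ∪ (R' \ S)) := by
          rw [Finset.disjoint_union_right]
          constructor
          · refine Finset.disjoint_of_subset_left ?_ hdisM
            exact Finset.sdiff_subset_sdiff hObR (Finset.Subset.refl _)
          · rw [Finset.disjoint_left]
            intro x hxDb hxR'
            have hxOb := (Finset.mem_sdiff.mp hxDb).1
            exact (Finset.mem_sdiff.mp ((Finset.mem_sdiff.mp hxR').1)).2 hxOb
        have piece := submod_sets hsub Db (T t ∪ Ct) (M ∪ (R' \ S)) hABase hDbdis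
        have hADb : (T t ∪ Ct) ∪ Db = A' := by
          have hCtDb : Ct ∪ Db = Ob := by
            ext x
            simp only [Finset.mem_union, hDb, Finset.mem_sdiff]
            constructor
            · rintro (h | ⟨h, _⟩)
              · exact hCtOb h
              · exact h
            · intro hxOb
              by_cases hxS : x ∈ S
              · exact Or.inl (hObS x hxOb hxS)
              · exact Or.inr ⟨hxOb, hxS⟩
          rw [Finset.union_assoc, hCtDb, hTOb]
        rw [hADb] at piece
        have hγval : f (T t ∪ Ct) = f (T t) + γf t := by
          simp only [hγf]
          ring
        rw [Finset.sum_range_succ, hMun]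
        have hfin : f ((M ∪ (R' \ S)) ∪ Db) - f (M ∪ (R' \ S)) ≤
            f (T (t+1)) - f (T t) - γf t := by
          have : f A' - f (T t ∪ Ct) ≤ f (T (t+1)) - f (T t) - γf t := by
            rw [hγval]; linarith
          linarith
        linarith
  -- last-batch construction
  set Cl := Jl ∩ Ostar with hCl
  have hClJl : Cl ⊆ Jl := Finset.inter_subset_left
  have hJlS : Jl ⊆ S := by rw [hJleq]; exact Finset.subset_union_right
  have hTl1 : T (l-1) ⊆ S := hTS (l-1) le_rfl
  have hIAl : I (T (l-1) ∪ Cl) := by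
    refine hher hIS ?_
    exact Finset.union_subset hTl1 (hClJl.trans hJlS)
  have hdisTCl : Disjoint (T (l-1)) Cl :=
    Finset.disjoint_of_subset_right hClJl hJldis.symm
  have hTl1card : (T (l-1)).card = k * (l-1) := (hTfacts (l-1) le_rfl).2
  have hcardAl : (T (l-1) ∪ Cl).card ≤ Ostar.card := by
    rw [Finset.card_union_of_disjoint hdisTCl, hOscard, hK, hTl1card]
    have : Cl.card ≤ m := by
      calc Cl.card ≤ Jl.card := Finset.card_le_card hClJl
        _ = m := hJlcard
    omega
  obtain ⟨A', hIA', hAA', hA'sub, hA'card⟩ :=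
    indep_extend hher haug _ (T (l-1) ∪ Cl) Ostar hIAl hIOs hcardAl rfl
  set Ol := A' \ T (l-1) with hOl
  have hTlA' : T (l-1) ⊆ A' := (Finset.subset_union_left).trans hAA'
  have hOlcard : Ol.card = m := by
    rw [hOl, Finset.card_sdiff_of_subset hTlA', hA'card, hOscard, hK, hTl1card]
    omega
  have hOlOs : Ol ⊆ Ostar := by
    intro x hx
    obtain ⟨hxA', hxT⟩ := Finset.mem_sdiff.mp hx
    rcases Finset.mem_union.mp (hA'sub hxA') with h | h
    · rcases Finset.mem_union.mp h with h' | h'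
      · exact absurd h' hxT
      · exact (Finset.inter_subset_right) h'
    · exact h
  have hClOl : Cl ⊆ Ol := by
    intro x hx
    refine Finset.mem_sdiff.mpr ⟨hAA' (Finset.mem_union_right _ hx), ?_⟩
    exact fun hxT => Finset.disjoint_left.mp hdisTCl.symm hx hxT
  have hTOl : T (l-1) ∪ Ol = A' := Finset.union_sdiff_of_subset hTlA'
  set R := Ostar \ Ol with hR
  have hRO : R ⊆ Ostar := Finset.sdiff_subset
  have hRcard : R.card = (T (l-1)).card := by
    rw [hR, Finset.card_sdiff_of_subset hOlOs, hOscard, hK, hTl1card, hOlcard]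
    omega
  have hRS : ∀ x ∈ R, x ∈ S → x ∈ T (l-1) := by
    intro x hx hxS
    obtain ⟨hxO, hxOl⟩ := Finset.mem_sdiff.mp hx
    rw [hJleq] at hxS
    rcases Finset.mem_union.mp hxS with h | h
    · exact h
    · exact absurd (hClOl (Finset.mem_inter.mpr ⟨h, hxO⟩)) hxOl
  have hOT : ∀ x ∈ Ostar, x ∈ T (l-1) → x ∈ R := by
    intro x hxO hxT
    refine Finset.mem_sdiff.mpr ⟨hxO, ?_⟩
    intro hxOl
    exact (Finset.mem_sdiff.mp hxOl).2 hxT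
  have hdisM : Disjoint (R \ S) A' := by
    rw [Finset.disjoint_left]
    intro x hxRS hxA'
    obtain ⟨hxR, hxS⟩ := Finset.mem_sdiff.mp hxRS
    have hxT : x ∉ T (l-1) := fun h => hxS (hTl1 h)
    have hxOl : x ∈ Ol := Finset.mem_sdiff.mpr ⟨hxA', hxT⟩
    exact (Finset.mem_sdiff.mp hxR).2 hxOl
  have hCLfin := CL (l-1) le_rfl R A' hRO hRS hOT hRcard hTlA' hdisM
  have hMeq : A' ∪ (R \ S) = Ostar ∪ T (l-1) := by
    ext x
    simp only [Finset.mem_union, Finset.mem_sdiff]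
    constructor
    · rintro (h | ⟨hxR, _⟩)
      · rcases Finset.mem_union.mp (hA'sub h) with h' | h'
        · rcases Finset.mem_union.mp h' with h'' | h''
          · exact Or.inr h''
          · exact Or.inl ((Finset.inter_subset_right) h'')
        · exact Or.inl h'
      · exact Or.inl (hRO hxR)
    · rintro (h | h)
      · by_cases hxOl : x ∈ Ol
        · exact Or.inl (hTOl ▸ Finset.mem_union_right _ hxOl)
        · by_cases hxS : x ∈ S
          · exact Or.inl (hTlA' (hRS x (Finset.mem_sdiff.mpr ⟨h, hxOl⟩) hxS))
          · exact Or.inr ⟨Finset.mem_sdiff.mpr ⟨h, hxOl⟩, hxS⟩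
      · exact Or.inl (hTlA' h)
  have hgrl : f A' ≤ f S := by
    have hOldis : Disjoint Ol (T (l-1)) := Finset.sdiff_disjoint
    have := hJlmax Ol hOldis hOlcard (by rw [hTOl]; exact hIA')
    rw [hTOl, ← hJleq] at this
    exact this
  -- sums
  have hsumδ : ∑ s ∈ Finset.range (l-1), (f (T (s+1)) - f (T s)) =
      f (T (l-1)) - f (T 0) := Finset.sum_range_sub (fun s => f (T s)) (l-1)
  have hsumsplit : ∑ s ∈ Finset.range (l-1), ((f (T (s+1)) - f (T s)) - γf s) =
      (∑ s ∈ Finset.range (l-1), (f (T (s+1)) - f (T s))) -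
      ∑ s ∈ Finset.range (l-1), γf s := Finset.sum_sub_distrib _ _
  have hT0v : f (T 0) = 0 := by rw [hT0, hemp]
  have hdescfin := desc (l-1) le_rfl
  have hchain : f (Ostar ∪ T (l-1)) ≤ f S +
      ((f (T (l-1)) - f (T 0)) - ∑ s ∈ Finset.range (l-1), γf s) := by
    rw [← hMeq]
    calc f (A' ∪ (R \ S)) ≤ f A' +
        ∑ s ∈ Finset.range (l-1), ((f (T (s+1)) - f (T s)) - γf s) := hCLfin
      _ = f A' + ((f (T (l-1)) - f (T 0)) - ∑ s ∈ Finset.range (l-1), γf s) := by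
          rw [hsumsplit, hsumδ]
      _ ≤ _ := by linarith
  have hfO : f O ≤ f Ostar := hmono hOsub
  have hTlfS : f (T (l-1)) ≤ f S := hmono hTl1
  have hcTl : c * f (T (l-1)) ≤ c * f S := mul_le_mul_of_nonneg_left hTlfS hc0
  have e1 : (1 - c) * f (T (l-1)) = f (T (l-1)) - c * f (T (l-1)) := by ring
  have e2 : (1 + c) * f S = f S + c * f S := by ring
  rw [ge_iff_le, e2]
  linarith [hdescfin, hchain, hfO, hT0v, hcTl, e1]
end

section
/- Let f : 2^X → ℝ be a polymatroid set function with f({a}) > 0 for every a ∈ X, and let 1 ≤ k_1 ≤ k_2 ≤ |X|. Then the total batch curvatures satisfy c_{k_2} ≤ c_{k_1}, i.e., the total k-batch curvature is nonincreasing in the batch size k. -/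
open Finset

variable {α : Type*} [DecidableEq α] [Fintype α]

lemma aux_sum_insert (f : Finset α → ℝ) (hsub : SetSubmodular f) (S : Finset α)
    (J : Finset α) :
    (∀ a ∈ J, a ∉ S) → f (S ∪ J) - f S ≤ ∑ a ∈ J, (f (insert a S) - f S) := by
  induction J using Finset.induction_on with
  | empty => simp
  | @insert a J' ha IH =>
    intro hdisj
    have haS : a ∉ S := hdisj a (mem_insert_self a J')
    have haSJ : a ∉ S ∪ J' := by simp [haS, ha]
    have hkey := hsub (Finset.subset_union_left : S ⊆ S ∪ J') a haSJ
    have hIH := IH (fun b hb => hdisj b (mem_insert_of_mem hb))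
    rw [Finset.sum_insert ha, Finset.union_insert]
    linarith

lemma aux_sum_erase (f : Finset α → ℝ) (hsub : SetSubmodular f) (J : Finset α)
    (T : Finset α) :
    T ⊆ J → ∑ a ∈ T, (f J - f (J.erase a)) ≤ f J - f (J \ T) := by
  induction T using Finset.induction_on with
  | empty => simp
  | @insert a T' ha IH =>
    intro hsubJ
    have haJ : a ∈ J := hsubJ (mem_insert_self a T')
    have hT'J : T' ⊆ J := fun b hb => hsubJ (mem_insert_of_mem hb)
    have hAB : J \ insert a T' ⊆ J.erase a := by
      intro x hx
      simp only [Finset.mem_sdiff, Finset.mem_insert, not_or] at hx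
      exact Finset.mem_erase.mpr ⟨hx.2.1, hx.1⟩
    have hanot : a ∉ J.erase a := Finset.notMem_erase a J
    have hkey := hsub hAB a hanot
    have e1 : insert a (J \ insert a T') = J \ T' := by
      ext x
      simp only [Finset.mem_insert, Finset.mem_sdiff, Finset.mem_insert, not_or]
      constructor
      · rintro (rfl | ⟨hxJ, _, hx⟩)
        · exact ⟨haJ, ha⟩
        · exact ⟨hxJ, hx⟩
      · rintro ⟨hxJ, hx⟩
        by_cases hxa : x = a
        · exact Or.inl hxa
        · exact Or.inr ⟨hxJ, hxa, hx⟩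
    have e2 : insert a (J.erase a) = J := Finset.insert_erase haJ
    rw [e1, e2] at hkey
    have hIH := IH hT'J
    rw [Finset.sum_insert ha]
    linarith

lemma aux_fpos (f : Finset α → ℝ) (hmono : SetMonotone f)
    (hpos : ∀ a : α, 0 < f {a}) {I : Finset α} (hI : I.Nonempty) : 0 < f I := by
  obtain ⟨a, ha⟩ := hI
  exact lt_of_lt_of_le (hpos a) (hmono (Finset.singleton_subset_iff.mpr ha))

lemma aux_step (f : Finset α → ℝ) (hmono : SetMonotone f) (hsub : SetSubmodular f)
    (hempty : f ∅ = 0) (hpos : ∀ a : α, 0 < f {a})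
    (J : Finset α) (hJ : 2 ≤ J.card) :
    ∃ a ∈ J, (f Finset.univ - f (Finset.univ \ J.erase a)) * f J ≤
      (f Finset.univ - f (Finset.univ \ J)) * f (J.erase a) := by
  by_contra hcon
  push_neg at hcon
  have hne : J.Nonempty := Finset.card_pos.mp (by omega)
  set S : Finset α := Finset.univ \ J with hS
  have hSa : ∀ a ∈ J, Finset.univ \ J.erase a = insert a S := by
    intro a ha
    ext x
    simp only [hS, Finset.mem_sdiff, Finset.mem_univ, true_and, Finset.mem_erase,
      Finset.mem_insert]
    tauto
  have hcon' : ∀ a ∈ J,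
      (f Finset.univ - f S) * f (J.erase a) < (f Finset.univ - f (insert a S)) * f J := by
    intro a ha
    have := hcon a ha
    rwa [hSa a ha] at this
  have hsum := Finset.sum_lt_sum_of_nonempty hne hcon'
  have hSU : S ∪ J = Finset.univ :=
    Finset.sdiff_union_of_subset (Finset.subset_univ J)
  have h1 : f Finset.univ - f S ≤ ∑ a ∈ J, (f (insert a S) - f S) := by
    have := aux_sum_insert f hsub S J (fun a ha => by simp [hS, ha])
    rwa [hSU] at this
  have h2 : ∑ a ∈ J, (f J - f (J.erase a)) ≤ f J := by
    have := aux_sum_erase f hsub J J (Finset.Subset.refl J)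
    rwa [Finset.sdiff_self, hempty, sub_zero] at this
  have hfJ : 0 < f J := aux_fpos f hmono hpos hne
  have hB : 0 ≤ f Finset.univ - f S := by
    have := hmono (Finset.subset_univ S); linarith
  set n : ℝ := (J.card : ℝ) with hn
  have hn2 : (2 : ℝ) ≤ n := by rw [hn]; exact_mod_cast hJ
  set E : ℝ := ∑ a ∈ J, f (J.erase a) with hE
  set M : ℝ := ∑ a ∈ J, f (insert a S) with hM
  have h1' : f Finset.univ - f S ≤ M - n * f S := by
    have : ∑ a ∈ J, (f (insert a S) - f S) = M - n * f S := by
      rw [Finset.sum_sub_distrib, Finset.sum_const, nsmul_eq_mul]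
    linarith [h1, this ▸ h1]
  have h2' : n * f J - E ≤ f J := by
    have : ∑ a ∈ J, (f J - f (J.erase a)) = n * f J - E := by
      rw [Finset.sum_sub_distrib, Finset.sum_const, nsmul_eq_mul]
    linarith [this ▸ h2]
  have hsum' : (f Finset.univ - f S) * E < (n * f Finset.univ - M) * f J := by
    have l : ∑ a ∈ J, (f Finset.univ - f S) * f (J.erase a) = (f Finset.univ - f S) * E := by
      rw [hE, Finset.mul_sum]
    have r : ∑ a ∈ J, (f Finset.univ - f (insert a S)) * f J
        = (n * f Finset.univ - M) * f J := by
      rw [← Finset.sum_mul, Finset.sum_sub_distrib, Finset.sum_const, nsmul_eq_mul]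
    rw [l, r] at hsum
    exact hsum
  have hEge : (n - 1) * f J ≤ E := by linarith
  have hMle : n * f Finset.univ - M ≤ (n - 1) * (f Finset.univ - f S) := by linarith
  nlinarith [mul_le_mul_of_nonneg_left hEge hB,
    mul_le_mul_of_nonneg_right hMle hfJ.le]

lemma aux_exists_subset (f : Finset α → ℝ) (hmono : SetMonotone f)
    (hsub : SetSubmodular f) (hempty : f ∅ = 0) (hpos : ∀ a : α, 0 < f {a})
    (k : ℕ) (hk : 1 ≤ k) :
    ∀ n : ℕ, ∀ J : Finset α, J.card = k + n →
      ∃ I, I ⊆ J ∧ I.card = k ∧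
        (f Finset.univ - f (Finset.univ \ I)) / f I ≤
          (f Finset.univ - f (Finset.univ \ J)) / f J := by
  intro n
  induction n with
  | zero =>
    intro J hJ
    exact ⟨J, Finset.Subset.refl J, by omega, le_refl _⟩
  | succ m IH =>
    intro J hJ
    have hJ2 : 2 ≤ J.card := by omega
    obtain ⟨a, ha, hprod⟩ := aux_step f hmono hsub hempty hpos J hJ2
    have hcardE : (J.erase a).card = k + m := by
      rw [Finset.card_erase_of_mem ha]; omega
    have hEne : (J.erase a).Nonempty := Finset.card_pos.mp (by omega)
    have hfE : 0 < f (J.erase a) := aux_fpos f hmono hpos hEne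
    have hfJ : 0 < f J := aux_fpos f hmono hpos (Finset.card_pos.mp (by omega))
    have hdiv : (f Finset.univ - f (Finset.univ \ J.erase a)) / f (J.erase a) ≤
        (f Finset.univ - f (Finset.univ \ J)) / f J :=
      (div_le_div_iff₀ hfE hfJ).mpr hprod
    obtain ⟨I, hIsub, hIcard, hIle⟩ := IH (J.erase a) hcardE
    exact ⟨I, hIsub.trans (Finset.erase_subset a J), hIcard, hIle.trans hdiv⟩

/-- The total `k`-batch curvature is nonincreasing in the batch size `k`. -/
theorem batchCurvature_antitone {α : Type*} [DecidableEq α] [Fintype α]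
    (f : Finset α → ℝ) (hf : PolymatroidFn f)
    (hpos : ∀ a : α, 0 < f {a})
    (k₁ k₂ : ℕ) (hk1 : 1 ≤ k₁) (hk12 : k₁ ≤ k₂) (hk2 : k₂ ≤ Fintype.card α) :
    batchCurvature f k₂ ≤ batchCurvature f k₁ := by
  obtain ⟨hmono, hsub, hempty⟩ := hf
  -- the k₁ set is bounded above by 1
  have hbdd : BddAbove {x : ℝ | ∃ J : Finset α, J.card = k₁ ∧ f J ≠ f ∅ ∧
      x = 1 - (f Finset.univ - f (Finset.univ \ J)) / (f J - f ∅)} := by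
    refine ⟨1, ?_⟩
    rintro x ⟨J, hJcard, hJne, rfl⟩
    have hJne' : J.Nonempty := Finset.card_pos.mp (by omega)
    have hfJ : 0 < f J := aux_fpos f hmono hpos hJne'
    have hnum : 0 ≤ f Finset.univ - f (Finset.univ \ J) := by
      have := hmono (Finset.subset_univ (Finset.univ \ J)); linarith
    have : 0 ≤ (f Finset.univ - f (Finset.univ \ J)) / (f J - f ∅) := by
      apply div_nonneg hnum; rw [hempty]; linarith
    linarith
  -- the k₂ set is nonempty
  obtain ⟨J₀, _, hJ₀card⟩ := Finset.exists_subset_card_eq (s := (Finset.univ : Finset α)) (n := k₂)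
    (by simpa [Finset.card_univ] using hk2)
  have hJ₀ne : J₀.Nonempty := Finset.card_pos.mp (by omega)
  have hJ₀pos : 0 < f J₀ := aux_fpos f hmono hpos hJ₀ne
  have hnonempty : Set.Nonempty {x : ℝ | ∃ J : Finset α, J.card = k₂ ∧ f J ≠ f ∅ ∧
      x = 1 - (f Finset.univ - f (Finset.univ \ J)) / (f J - f ∅)} :=
    ⟨_, J₀, hJ₀card, by rw [hempty]; exact ne_of_gt hJ₀pos, rfl⟩
  apply csSup_le hnonempty
  rintro x ⟨J, hJcard, hJne, rfl⟩
  obtain ⟨I, hIsub, hIcard, hIle⟩ := aux_exists_subset f hmono hsub hempty hpos k₁ hk1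
    (k₂ - k₁) J (by omega)
  have hIne : I.Nonempty := Finset.card_pos.mp (by omega)
  have hfI : 0 < f I := aux_fpos f hmono hpos hIne
  have hmem : (1 - (f Finset.univ - f (Finset.univ \ I)) / (f I - f ∅)) ∈
      {x : ℝ | ∃ J : Finset α, J.card = k₁ ∧ f J ≠ f ∅ ∧
        x = 1 - (f Finset.univ - f (Finset.univ \ J)) / (f J - f ∅)} :=
    ⟨I, hIcard, by rw [hempty]; exact ne_of_gt hfI, rfl⟩
  calc 1 - (f Finset.univ - f (Finset.univ \ J)) / (f J - f ∅)
      ≤ 1 - (f Finset.univ - f (Finset.univ \ I)) / (f I - f ∅) := by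
        rw [hempty, sub_zero, sub_zero]; linarith
    _ ≤ batchCurvature f k₁ := le_csSup hbdd hmem
end

section
/- Let X be a finite set of actions, K ≥ 1, and let f : X* → ℝ be a polymatroid string function that is also postfix monotone. Let G_K be any greedy string of length K and O_K any string of length at most K maximizing f over strings of length at most K. Then f(G_K) ≥ (1 − (1 − 1/K)^K) · f(O_K), and 1 − (1 − 1/K)^K > 1 − 1/e. -/
variable {α : Type*}

/-- Prefix monotone string function. -/
def PrefixMonotone (f : List α → ℝ) : Prop :=
  ∀ M N : List α, f M ≤ f (M ++ N)

/-- Postfix monotone string function. -/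
def PostfixMonotone (f : List α → ℝ) : Prop :=
  ∀ M N : List α, f N ≤ f (M ++ N)

/-- Diminishing-return property for string functions. -/
def DiminishingReturn (f : List α → ℝ) : Prop :=
  ∀ M N : List α, M <+: N → ∀ a : α, f (M ++ [a]) - f M ≥ f (N ++ [a]) - f N

/-- Polymatroid string function. -/
def PolymatroidString (f : List α → ℝ) : Prop :=
  f [] = 0 ∧ PrefixMonotone f ∧ DiminishingReturn f

/-- Greedy string: each action maximizes the stepwise gain over all actions. -/
def IsGreedyString (f : List α → ℝ) (G : List α) : Prop :=
  ∀ i < G.length, ∀ a : α, f (G.take i ++ [a]) ≤ f (G.take (i + 1))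

/-- Greedy bound for string optimization with a postfix-monotone polymatroid
string function: `f(G_K) ≥ (1 - (1 - 1/K)^K) · f(O_K)`, and
`1 - (1 - 1/K)^K > 1 - 1/e`. -/
theorem greedy_string_bound {α : Type*} [Fintype α]
    (K : ℕ) (hK : 1 ≤ K)
    (f : List α → ℝ) (hf : PolymatroidString f) (hpost : PostfixMonotone f)
    (G : List α) (hGlen : G.length = K) (hG : IsGreedyString f G)
    (O : List α) (hOlen : O.length ≤ K)
    (hO : ∀ M : List α, M.length ≤ K → f M ≤ f O) :
    f G ≥ (1 - (1 - 1 / (K : ℝ)) ^ K) * f O ∧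
      1 - (1 - 1 / (K : ℝ)) ^ K > 1 - 1 / Real.exp 1 := by
  obtain ⟨hf0, hpre, hdr⟩ := hf
  have hKpos : (0:ℝ) < K := by exact_mod_cast hK
  have hKne : (K:ℝ) ≠ 0 := ne_of_gt hKpos
  set r : ℝ := 1 - 1 / (K:ℝ) with hrdef
  have hr0 : 0 ≤ r := by
    have : 1 / (K:ℝ) ≤ 1 := by
      rw [div_le_one hKpos]; exact_mod_cast hK
    rw [hrdef, sub_nonneg]; linarith
  have hGne : G ≠ [] := by
    intro h; rw [h] at hGlen; simp at hGlen; omega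
  have a0 : α := G.head hGne
  -- telescoping lemma
  have tel : ∀ (B : List α) (c : ℝ), (∀ a : α, f (B ++ [a]) - f B ≤ c) →
      ∀ L : List α, f (B ++ L) ≤ f B + L.length * c := by
    intro B c hc L
    induction L using List.reverseRecOn with
    | nil => simp
    | append_singleton L a ih =>
      have h1 : f ((B ++ L) ++ [a]) - f (B ++ L) ≤ f (B ++ [a]) - f B :=
        hdr B (B ++ L) ⟨L, rfl⟩ a
      have h2 := hc a
      have h3 : f (B ++ (L ++ [a])) = f ((B ++ L) ++ [a]) := by
        rw [List.append_assoc]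
      rw [h3]
      simp only [List.length_append, List.length_singleton]
      push_cast
      nlinarith [ih]
  -- one greedy step
  have step : ∀ i < K, f O - f (G.take (i+1)) ≤ r * (f O - f (G.take i)) := by
    intro i hi
    set B := G.take i with hB
    set c : ℝ := f (G.take (i+1)) - f B with hc
    have hgr : ∀ a : α, f (B ++ [a]) - f B ≤ c := by
      intro a
      have := hG i (by omega) a
      simp [hc]; linarith
    have hc0 : 0 ≤ c := by
      have h1 : f B ≤ f (B ++ [a0]) := hpre B [a0]
      have h2 := hgr a0
      linarith
    have h1 : f O ≤ f (B ++ O) := hpost B O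
    have h2 : f (B ++ O) ≤ f B + O.length * c := tel B c hgr O
    have h3 : (O.length : ℝ) * c ≤ (K:ℝ) * c := by
      apply mul_le_mul_of_nonneg_right _ hc0
      exact_mod_cast hOlen
    have hfin : f O ≤ f B + (K:ℝ) * c := by linarith
    have : f O - f (G.take (i+1)) = (f O - f B) - c := by rw [hc]; ring
    have hdiv : (f O - f B) / K ≤ c := by
      rw [div_le_iff₀ hKpos]; nlinarith
    have e : (1 - 1/(K:ℝ)) * (f O - f B) = (f O - f B) - (f O - f B)/K := by
      field_simp
    rw [this, hrdef, e]
    linarith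
  -- induction
  have main : ∀ i ≤ K, f O - f (G.take i) ≤ r ^ i * f O := by
    intro i
    induction i with
    | zero => intro _; simp [hf0]
    | succ i ih =>
      intro h
      have h1 := step i (by omega)
      have h2 := ih (by omega)
      calc f O - f (G.take (i+1)) ≤ r * (f O - f (G.take i)) := h1
        _ ≤ r * (r ^ i * f O) := mul_le_mul_of_nonneg_left h2 hr0
        _ = r ^ (i+1) * f O := by ring
  have hmainK := main K le_rfl
  have htake : G.take K = G := by rw [← hGlen]; exact List.take_length
  rw [htake] at hmainK
  constructor
  · linarith
  · have hx : -(1 / (K:ℝ)) ≠ 0 := by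
      have h' : 0 < 1/(K:ℝ) := by positivity
      intro h; rw [neg_eq_zero] at h; linarith
    have h1 : r < Real.exp (-(1/K)) := by
      have := Real.add_one_lt_exp hx
      rw [hrdef]; linarith
    have h2 : r ^ K < Real.exp (-(1/K)) ^ K :=
      pow_lt_pow_left₀ h1 hr0 (by omega)
    have h3 : Real.exp (-(1/K)) ^ K = Real.exp (-1) := by
      rw [← Real.exp_nat_mul]
      congr 1
      field_simp
    rw [h3, Real.exp_neg] at h2
    have : 1 / Real.exp 1 = (Real.exp 1)⁻¹ := one_div _
    linarith [h2, this ▸ h2]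
end

section
/- Let X be a finite set of actions, K ≥ 1, and let f : X* → ℝ be a polymatroid string function. Let G_K be any greedy string of length K and O_K any string of length at most K maximizing f over strings of length at most K. Suppose σ ∈ (0, 1] is a real number such that f(N⊕O_K) − f(O_K) ≥ (1 − σ) · f(N) for every nonempty string N with |N| ≤ K. Then f(G_K) ≥ (1/σ) · (1 − (1 − σ/K)^K) · f(O_K). -/
variable {α : Type*}

/-- Greedy bound for string optimization in terms of an upper bound `σ` on the
total backward curvature of `f` with respect to the optimal string `O_K`:
`f(G_K) ≥ (1/σ)(1 - (1 - σ/K)^K) · f(O_K)`. -/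
theorem greedy_string_bound_backward_curvature {α : Type*} [Fintype α]
    (K : ℕ) (hK : 1 ≤ K)
    (f : List α → ℝ) (hf : PolymatroidString f)
    (G : List α) (hGlen : G.length = K) (hG : IsGreedyString f G)
    (O : List α) (hOlen : O.length ≤ K)
    (hO : ∀ M : List α, M.length ≤ K → f M ≤ f O)
    (σ : ℝ) (hσ0 : 0 < σ) (hσ1 : σ ≤ 1)
    (hσ : ∀ N : List α, N ≠ [] → N.length ≤ K → f (N ++ O) - f O ≥ (1 - σ) * f N) :
    f G ≥ (1 / σ) * (1 - (1 - σ / (K : ℝ)) ^ K) * f O := by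
  obtain ⟨hf0, hmono, hDR⟩ := hf
  have hKpos : (0:ℝ) < (K:ℝ) := by exact_mod_cast hK
  have hK1 : (1:ℝ) ≤ (K:ℝ) := by exact_mod_cast hK
  set g : ℕ → ℝ := fun i => f (G.take i) with hg
  have hOnn : 0 ≤ f O := by
    have := hmono [] O; simpa [hf0] using this
  have hstep : ∀ i < K, ∀ a : α, f (G.take i ++ [a]) ≤ g (i+1) := by
    intro i hi a
    exact hG i (by omega) a
  have hgain : ∀ i, g i ≤ g (i+1) := by
    intro i
    have h1 : G.take i <+: G.take (i+1) := by
      have h := List.take_prefix i (G.take (i+1))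
      rwa [List.take_take, Nat.min_eq_left (Nat.le_succ i)] at h
    obtain ⟨L, hL⟩ := h1
    have := hmono (G.take i) L
    simp only [hg]
    rw [← hL]
    exact this
  -- telescoping bound
  have sum_bound : ∀ (M : List α) (c : ℝ), (∀ a, f (M ++ [a]) - f M ≤ c) →
      ∀ N : List α, f (M ++ N) - f M ≤ N.length * c := by
    intro M c hc N
    induction N using List.reverseRecOn with
    | nil => simp
    | append_singleton N a ih =>
      have hpre : M <+: M ++ N := List.prefix_append M N
      have hdr := hDR M (M ++ N) hpre a
      have h1 : f ((M ++ N) ++ [a]) - f (M ++ N) ≤ c := le_trans hdr (hc a)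
      have h2 : f (M ++ (N ++ [a])) = f ((M ++ N) ++ [a]) := by rw [List.append_assoc]
      have hlen : ((N ++ [a]).length : ℝ) = (N.length : ℝ) + 1 := by
        simp
      rw [hlen]
      rw [h2]
      linarith
  have key : ∀ i < K, f O ≤ σ * g i + (K:ℝ) * (g (i+1) - g i) := by
    intro i hi
    have hc : ∀ a, f (G.take i ++ [a]) - f (G.take i) ≤ g (i+1) - g i := by
      intro a
      have := hstep i hi a
      simp only [hg]
      linarith
    have h1 := sum_bound (G.take i) _ hc O
    have hcnn : 0 ≤ g (i+1) - g i := by linarith [hgain i]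
    have h2 : f (G.take i ++ O) - g i ≤ (K:ℝ) * (g (i+1) - g i) := by
      have hOl : (O.length : ℝ) ≤ (K:ℝ) := by exact_mod_cast hOlen
      have := mul_le_mul_of_nonneg_right hOl hcnn
      simp only [hg] at h1 ⊢
      linarith
    have h3 : (1 - σ) * g i ≤ f (G.take i ++ O) - f O := by
      rcases Nat.eq_zero_or_pos i with h0 | h0
      · subst h0
        simp [hg, hf0]
      · have hne : G.take i ≠ [] := by
          have : (G.take i).length = i := by
            rw [List.length_take, hGlen]; omega
          intro h
          rw [h] at this
          simp at this
          omega
        have hlen : (G.take i).length ≤ K := by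
          rw [List.length_take, hGlen]; omega
        exact hσ (G.take i) hne hlen
    linarith
  have main : ∀ i ≤ K, (1/σ) * (1 - (1 - σ/(K:ℝ))^i) * f O ≤ g i := by
    intro i
    induction i with
    | zero => intro _; simp [hg, hf0]
    | succ i ih =>
      intro h
      have hi : i < K := h
      have hIH := ih (le_of_lt hi)
      have hk := key i hi
      have hr0 : 0 ≤ 1 - σ/(K:ℝ) := by
        have : σ/(K:ℝ) ≤ 1 := by
          rw [div_le_one hKpos]; linarith
        linarith
      have h4 : (1 - σ/(K:ℝ)) * g i + f O / (K:ℝ) ≤ g (i+1) := by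
        have h' : (K:ℝ) * ((1 - σ/(K:ℝ)) * g i + f O / (K:ℝ)) = (K:ℝ) * g i - σ * g i + f O := by
          field_simp
        have h'' : (K:ℝ) * ((1 - σ/(K:ℝ)) * g i + f O / (K:ℝ)) ≤ (K:ℝ) * g (i+1) := by
          rw [h']; linarith
        exact le_of_mul_le_mul_left h'' hKpos
      have h5 : (1 - σ/(K:ℝ)) * ((1/σ) * (1 - (1 - σ/(K:ℝ))^i) * f O) ≤ (1 - σ/(K:ℝ)) * g i :=
        mul_le_mul_of_nonneg_left hIH hr0
      have halg : (1/σ) * (1 - (1 - σ/(K:ℝ))^(i+1)) * f O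
          = (1 - σ/(K:ℝ)) * ((1/σ) * (1 - (1 - σ/(K:ℝ))^i) * f O) + f O / (K:ℝ) := by
        have hσne : σ ≠ 0 := ne_of_gt hσ0
        have hKne : (K:ℝ) ≠ 0 := ne_of_gt hKpos
        rw [pow_succ]
        field_simp
        ring
      rw [halg]
      linarith
  have := main K le_rfl
  have hGK : G.take K = G := by
    rw [← hGlen, List.take_length]
  simp only [hg, hGK] at this
  linarith
end

section
/- Let (X, 𝓘) be a string matroid of rank K and let f : X* → ℝ be a polymatroid string function. Let G_K be any greedy string of length K subject to the constraint 𝓘, and let O_K ∈ 𝓘 be an optimal string of length K, i.e., a string of length K maximizing f over 𝓘. Suppose σ ∈ [0, 1] is a real number such that f(N⊕O_K) − f(O_K) ≥ (1 − σ) · f(N) for every nonempty string N with |N| ≤ K. Then (1 + σ) · f(G_K) ≥ f(O_K). -/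
variable {α : Type*}

/-- Hereditary property for collections of strings: closed under subsequences. -/
def StringHereditary (SM : List α → Prop) : Prop :=
  ∀ ⦃M⦄, SM M → ∀ ⦃N : List α⦄, N.Sublist M → SM N

/-- Augmentation property for collections of strings. -/
def StringAugmentation (SM : List α → Prop) : Prop :=
  ∀ ⦃M N⦄, SM M → SM N → M.length < N.length → ∃ x ∈ N, SM (M ++ [x])

/-- String matroid. -/
def IsStringMatroid (SM : List α → Prop) : Prop :=
  (∃ M, SM M) ∧ StringHereditary SM ∧ StringAugmentation SM

/-- Greedy string subject to the constraint `SM`: each step stays feasible and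
maximizes the stepwise gain over all feasible actions. -/
def IsGreedyStringC (SM : List α → Prop) (f : List α → ℝ) (G : List α) : Prop :=
  ∀ i < G.length, SM (G.take (i + 1)) ∧
    ∀ a : α, SM (G.take i ++ [a]) → f (G.take i ++ [a]) ≤ f (G.take (i + 1))


private theorem ofFn_get_sublist'' {α : Type*} (O : List α) (S : Finset (Fin O.length)) {n : ℕ}
    (h : S.card = n) :
    (List.ofFn (fun j : Fin n => O.get (S.orderEmbOfFin h j))).Sublist O := by
  rw [List.sublist_iff_exists_fin_orderEmbedding_get_eq]
  refine ⟨(Fin.castOrderIso List.length_ofFn).toOrderEmbedding.trans (S.orderEmbOfFin h), ?_⟩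
  intro ix
  simp only [List.get_ofFn]
  rfl

private theorem assign_aux'' {α : Type*} (SM : List α → Prop)
    (hher : StringHereditary SM) (haug : StringAugmentation SM)
    (O : List α) (hOmem : SM O) (G : List α)
    (hGSM : ∀ m, m < O.length → SM (G.take m)) :
    ∀ n : ℕ, ∀ S : Finset (Fin O.length), S.card = n →
      ∃ π : Fin n → Fin O.length, Function.Injective π ∧ (∀ j, π j ∈ S) ∧
        ∀ j : Fin n, SM (G.take j ++ [O.get (π j)]) := by
  intro n
  induction n with
  | zero => intro S _; exact ⟨Fin.elim0, fun a => a.elim0, fun a => a.elim0, fun a => a.elim0⟩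
  | succ n ih =>
    intro S hS
    have hNsub := ofFn_get_sublist'' O S hS
    have hNSM : SM _ := hher hOmem hNsub
    have hnK : n < O.length := by
      have h1 : S.card ≤ O.length := by simpa using S.card_le_univ
      omega
    have hNlen : (G.take n).length <
        (List.ofFn (fun j : Fin (n+1) => O.get (S.orderEmbOfFin hS j))).length := by
      rw [List.length_take, List.length_ofFn]; omega
    obtain ⟨x, hxN, hx⟩ := haug (hGSM n hnK) hNSM hNlen
    obtain ⟨j0, hj0⟩ := List.mem_ofFn.mp hxN
    set p : Fin O.length := S.orderEmbOfFin hS j0 with hp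
    have hpS : p ∈ S := S.orderEmbOfFin_mem hS j0
    have hpx : O.get p = x := hj0
    obtain ⟨π', hinj, hmem, hprop⟩ := ih (S.erase p)
      (by rw [Finset.card_erase_of_mem hpS, hS]; omega)
    refine ⟨fun j => if h : (j : ℕ) < n then π' ⟨j, h⟩ else p, ?_, ?_, ?_⟩
    · intro a b hab
      by_cases ha : (a : ℕ) < n <;> by_cases hb : (b : ℕ) < n
      · simp only [dif_pos ha, dif_pos hb] at hab
        have h2 := congrArg Fin.val (hinj hab)
        exact Fin.ext h2
      · simp only [dif_pos ha, dif_neg hb] at hab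
        exact absurd (hmem ⟨a, ha⟩) (by rw [hab]; exact Finset.notMem_erase p S)
      · simp only [dif_neg ha, dif_pos hb] at hab
        exact absurd (hmem ⟨b, hb⟩) (by rw [← hab]; exact Finset.notMem_erase p S)
      · exact Fin.ext (by omega)
    · intro j
      by_cases h : (j : ℕ) < n
      · simp only [dif_pos h]; exact Finset.mem_of_mem_erase (hmem ⟨j, h⟩)
      · simp only [dif_neg h]; exact hpS
    · intro j
      by_cases h : (j : ℕ) < n
      · simpa only [dif_pos h] using hprop ⟨j, h⟩
      · have hjn : (j : ℕ) = n := by omega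
        simp only [dif_neg h, hpx]
        rw [hjn]
        exact hx

/-- Greedy bound for string optimization under a string matroid constraint in
terms of an upper bound `σ` on the total backward curvature with respect to the
optimal string: `(1 + σ) · f(G_K) ≥ f(O_K)`. -/
theorem greedy_string_bound_string_matroid {α : Type*} [Fintype α]
    (SM : List α → Prop) (hSM : IsStringMatroid SM)
    (K : ℕ)
    (hrank1 : ∀ M : List α, SM M → M.length ≤ K)
    (hrank2 : ∃ M : List α, SM M ∧ M.length = K)
    (f : List α → ℝ) (hf : PolymatroidString f)
    (G : List α) (hGlen : G.length = K) (hG : IsGreedyStringC SM f G)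
    (O : List α) (hOmem : SM O) (hOlen : O.length = K)
    (hO : ∀ M : List α, SM M → f M ≤ f O)
    (σ : ℝ) (hσ0 : 0 ≤ σ) (hσ1 : σ ≤ 1)
    (hσ : ∀ N : List α, N ≠ [] → N.length ≤ K → f (N ++ O) - f O ≥ (1 - σ) * f N) :
    (1 + σ) * f G ≥ f O := by
  obtain ⟨⟨M0, hM0⟩, hher, haug⟩ := hSM
  obtain ⟨hf0, hmono, hDR⟩ := hf
  by_cases hK0 : K = 0
  · have hGnil : G = [] := List.length_eq_zero_iff.mp (by omega)
    have hOnil : O = [] := List.length_eq_zero_iff.mp (by omega)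
    rw [hGnil, hOnil, hf0]
    simp
  · have hK1 : 1 ≤ K := Nat.one_le_iff_ne_zero.mpr hK0
    have hGSM : ∀ m, m < O.length → SM (G.take m) := by
      intro m hm
      cases m with
      | zero => exact hher hM0 (List.nil_sublist M0)
      | succ m => exact (hG m (by omega)).1
    obtain ⟨π, hπinj, -, hπ⟩ := assign_aux'' SM hher haug O hOmem G hGSM O.length
      Finset.univ (by simp)
    have hπbij : Function.Bijective π := Finite.injective_iff_bijective.mp hπinj
    set e := Equiv.ofBijective π hπbij with he
    have hstep : ∀ i : Fin O.length,
        f (G ++ O.take ((i : ℕ)+1)) - f (G ++ O.take (i : ℕ)) ≤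
        f (G.take (((e.symm i : Fin O.length) : ℕ)+1)) -
          f (G.take ((e.symm i : Fin O.length) : ℕ)) := by
      intro i
      set j : ℕ := ((e.symm i : Fin O.length) : ℕ) with hj
      have hTake : O.take ((i : ℕ)+1) = O.take (i : ℕ) ++ [O.get i] := by
        rw [List.take_succ, List.getElem?_eq_getElem i.isLt]
        rfl
      have hpre : (G.take j) <+: (G ++ O.take (i : ℕ)) :=
        (List.take_prefix j G).trans (List.prefix_append G _)
      have hdr := hDR (G.take j) (G ++ O.take (i : ℕ)) hpre (O.get i)
      have hfeas : SM (G.take j ++ [O.get i]) := by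
        have h1 := hπ (e.symm i)
        have h2 : π (e.symm i) = i := e.apply_symm_apply i
        rwa [h2] at h1
      have hjlt : j < G.length := by
        rw [hGlen, ← hOlen]; exact (e.symm i).isLt
      have hgr := (hG j hjlt).2 (O.get i) hfeas
      have heq : G ++ O.take ((i : ℕ)+1) = (G ++ O.take (i : ℕ)) ++ [O.get i] := by
        rw [hTake, List.append_assoc]
      rw [heq]
      linarith
    have hsum1 : ∑ i : Fin O.length,
        (f (G ++ O.take ((i : ℕ)+1)) - f (G ++ O.take (i : ℕ))) = f (G ++ O) - f G := by
      rw [Fin.sum_univ_eq_sum_range (fun i => f (G ++ O.take (i+1)) - f (G ++ O.take i)) O.length,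
        Finset.sum_range_sub (fun i => f (G ++ O.take i))]
      simp
    have hsum2 : ∑ i : Fin O.length,
        (f (G.take (((e.symm i : Fin O.length) : ℕ)+1)) -
          f (G.take ((e.symm i : Fin O.length) : ℕ))) = f G := by
      calc ∑ i : Fin O.length,
          (f (G.take (((e.symm i : Fin O.length) : ℕ)+1)) -
            f (G.take ((e.symm i : Fin O.length) : ℕ)))
          = ∑ j : Fin O.length, (f (G.take ((j : ℕ)+1)) - f (G.take (j : ℕ))) :=
            Equiv.sum_comp e.symm (fun j : Fin O.length => f (G.take ((j : ℕ)+1)) - f (G.take (j : ℕ)))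
        _ = f G := by
            rw [Fin.sum_univ_eq_sum_range (fun j => f (G.take (j+1)) - f (G.take j)) O.length,
              Finset.sum_range_sub (fun j => f (G.take j))]
            rw [hOlen, ← hGlen, List.take_length]
            simp [hf0]
    have hsumle : f (G ++ O) - f G ≤ f G := by
      rw [← hsum1, ← hsum2]
      exact Finset.sum_le_sum (fun i _ => hstep i)
    have hGne : G ≠ [] := by
      intro h
      rw [h] at hGlen
      simp at hGlen
      omega
    have hcurv := hσ G hGne (le_of_eq hGlen)
    linarith
end

section
/- Let X be a finite set of actions, K ≥ 1, and let f : X* → ℝ be K-polymatroid. Let G_K = (g_1, …, g_K) be any greedy string of length K, O_K = (o_1, …, o_K) any string of length at most K maximizing f over strings of length at most K (written with length K), and for 1 ≤ i ≤ K−1 let Ō_{K−i} = (o_{i+1}, …, o_K). If f is K-GO-concave, i.e., f(G_i ⊕ Ō_{K−i}) ≥ (i/K) · f(G_i) + (1 − i/K) · f(O_K) for all 1 ≤ i ≤ K−1, then f(G_K) ≥ (1 − (1 − 1/K)^K) · f(O_K) > (1 − 1/e) · f(O_K). -/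
variable {α : Type*}

/-- `K`-monotone string function. -/
def KMonotone (K : ℕ) (f : List α → ℝ) : Prop :=
  ∀ M N : List α, M.length + N.length ≤ K → f M ≤ f (M ++ N)

/-- `K`-diminishing string function. -/
def KDiminishing (K : ℕ) (f : List α → ℝ) : Prop :=
  ∀ M N : List α, M <+: N → N.length ≤ K - 1 →
    ∀ a : α, f (M ++ [a]) - f M ≥ f (N ++ [a]) - f N

/-- `K`-polymatroid string function. -/
def KPolymatroid (K : ℕ) (f : List α → ℝ) : Prop :=
  f [] = 0 ∧ KMonotone K f ∧ KDiminishing K f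

/-- Greedy bound for a `K`-polymatroid, `K`-GO-concave string function:
`f(G_K) ≥ (1 - (1 - 1/K)^K) · f(O_K)`, and `1 - (1 - 1/K)^K > 1 - 1/e`. -/
theorem greedy_string_bound_K_polymatroid {α : Type*} [Fintype α]
    (K : ℕ) (hK : 1 ≤ K)
    (f : List α → ℝ) (hf : KPolymatroid K f)
    (G : List α) (hGlen : G.length = K) (hG : IsGreedyString f G)
    (O : List α) (hOlen : O.length = K)
    (hO : ∀ M : List α, M.length ≤ K → f M ≤ f O)
    (hGO : ∀ i : ℕ, 1 ≤ i → i ≤ K - 1 →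
      f (G.take i ++ O.drop i) ≥
        ((i : ℝ) / (K : ℝ)) * f (G.take i) + (1 - (i : ℝ) / (K : ℝ)) * f O) :
    f G ≥ (1 - (1 - 1 / (K : ℝ)) ^ K) * f O ∧
      1 - (1 - 1 / (K : ℝ)) ^ K > 1 - 1 / Real.exp 1 := by
  obtain ⟨hf0, hmono, hdim⟩ := hf
  have hKpos : (0:ℝ) < (K:ℝ) := by exact_mod_cast hK
  have hKne : (K:ℝ) ≠ 0 := ne_of_gt hKpos
  set c : ℝ := 1 - 1/(K:ℝ) with hc
  have hc0 : 0 ≤ c := by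
    have h1 : 1/(K:ℝ) ≤ 1 := by
      rw [div_le_one hKpos]; exact_mod_cast hK
    simp only [hc]; linarith
  have hO0 : 0 ≤ f O := by
    have := hO [] (by simp)
    rw [hf0] at this; exact this
  -- auxiliary telescoping lemma
  have aux : ∀ (M : List α) (B : ℝ), (∀ a : α, f (M ++ [a]) ≤ B) →
      ∀ (L M' : List α), M <+: M' → M'.length + L.length ≤ K →
      f (M' ++ L) ≤ f M' + L.length * (B - f M) := by
    intro M B hB L
    induction L with
    | nil => intro M' _ _; simp
    | cons a L ih =>
      intro M' hpre hlen
      simp only [List.length_cons] at hlen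
      have h1 : f ((M' ++ [a]) ++ L) ≤ f (M' ++ [a]) + L.length * (B - f M) := by
        apply ih (M' ++ [a]) (hpre.trans (M'.prefix_append [a]))
        simp; omega
      have h2 : f (M' ++ [a]) - f M' ≤ f (M ++ [a]) - f M := by
        apply hdim M M' hpre ?_ a
        omega
      have h3 := hB a
      have heq : f (M' ++ (a :: L)) = f ((M' ++ [a]) ++ L) := by simp
      rw [heq]
      push_cast [List.length_cons]
      nlinarith [h1, h2, h3]
  -- per-step inequality
  have step : ∀ i < K, f O - f (G.take (i+1)) ≤ c * (f O - f (G.take i)) := by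
    intro i hi
    have hBgreedy : ∀ a : α, f (G.take i ++ [a]) ≤ f (G.take (i+1)) := by
      intro a; exact hG i (by omega) a
    have hlen : (G.take i).length + (O.drop i).length ≤ K := by
      simp [hGlen, hOlen]; omega
    have haux := aux (G.take i) _ hBgreedy (O.drop i) (G.take i) List.prefix_rfl hlen
    have hdroplen : ((O.drop i).length : ℝ) = (K:ℝ) - i := by
      have : (O.drop i).length = K - i := by simp [hOlen]
      rw [this]; push_cast [Nat.cast_sub (le_of_lt hi)]; ring
    rw [hdroplen] at haux
    have hGOi : f (G.take i ++ O.drop i) ≥ ((i:ℝ)/(K:ℝ)) * f (G.take i)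
        + (1 - (i:ℝ)/(K:ℝ)) * f O := by
      rcases Nat.eq_zero_or_pos i with h0 | h1
      · subst h0; simp [hf0]
      · exact hGO i h1 (by omega)
    have hfac : (0:ℝ) < (K:ℝ) - i := by
      have : (i:ℝ) < (K:ℝ) := by exact_mod_cast hi
      linarith
    set g := f (G.take i)
    set g' := f (G.take (i+1))
    have hmul : ((K:ℝ) - i) * ((f O - g)/K) ≤ ((K:ℝ) - i) * (g' - g) := by
      have lhs_eq : ((K:ℝ)-i)*((f O - g)/K)
          = ((i:ℝ)/(K:ℝ))*g + (1 - (i:ℝ)/(K:ℝ))*(f O) - g := by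
        field_simp; ring
      rw [lhs_eq]; linarith [haux, hGOi]
    have h2' : (f O - g)/K ≤ g' - g := le_of_mul_le_mul_left hmul hfac
    have expand : c * (f O - g) = (f O - g) - (f O - g)/K := by
      simp only [hc]; field_simp
    rw [expand]; linarith
  -- main induction
  have main : ∀ i ≤ K, f O - f (G.take i) ≤ c ^ i * f O := by
    intro i
    induction i with
    | zero => intro _; simp [hf0]
    | succ n ih =>
      intro h
      have h1 := step n (by omega)
      have h2 := ih (by omega)
      calc f O - f (G.take (n+1)) ≤ c * (f O - f (G.take n)) := h1
        _ ≤ c * (c^n * f O) := mul_le_mul_of_nonneg_left h2 hc0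
        _ = c^(n+1) * f O := by ring
  have hGfull : G.take K = G := by rw [← hGlen, List.take_length]
  have hmain := main K le_rfl
  rw [hGfull] at hmain
  constructor
  · have : (1 - c^K) * f O = f O - c^K * f O := by ring
    rw [this]; linarith
  · have hne : -(1/(K:ℝ)) ≠ 0 := by
      simp [hKne]
    have h1 : c < Real.exp (-(1/(K:ℝ))) := by
      have := Real.add_one_lt_exp hne
      simp only [hc]; linarith
    have h2 : c^K < (Real.exp (-(1/(K:ℝ))))^K :=
      pow_lt_pow_left₀ h1 hc0 (by omega)
    have h3 : (Real.exp (-(1/(K:ℝ))))^K = Real.exp (-1) := by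
      rw [← Real.exp_nat_mul]; congr 1; field_simp
    have h4 : Real.exp (-1) = 1 / Real.exp 1 := by
      rw [Real.exp_neg]; exact (one_div _).symm
    rw [h3, h4] at h2
    linarith
end

section
/- Let X be a finite set of actions, K ≥ 1, and let f : X* → ℝ be K-polymatroid. Let G_K = (g_1, …, g_K) be any greedy string of length K, O_K = (o_1, …, o_K) any string of length at most K maximizing f over strings of length at most K (written with length K), and for 1 ≤ i ≤ K−1 let Ō_{K−i} = (o_{i+1}, …, o_K). Suppose η ∈ (0, 1] is a real number such that for all 1 ≤ i ≤ K−1: f(G_i ⊕ Ō_{K−i}) ≥ (1 − η·(1 − i/K)) · f(G_i) + (1 − i/K) · f(O_K). Then f(G_K) ≥ (1/η) · (1 − (1 − η/K)^K) · f(O_K). -/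
variable {α : Type*}

/-- Greedy bound for a `K`-polymatroid string function in terms of an upper
bound `η` on the GO-curvature: `f(G_K) ≥ (1/η)(1 - (1 - η/K)^K) · f(O_K)`. -/
theorem greedy_string_bound_eta_curvature {α : Type*} [Fintype α]
    (K : ℕ) (hK : 1 ≤ K)
    (f : List α → ℝ) (hf : KPolymatroid K f)
    (G : List α) (hGlen : G.length = K) (hG : IsGreedyString f G)
    (O : List α) (hOlen : O.length = K)
    (hO : ∀ M : List α, M.length ≤ K → f M ≤ f O)
    (η : ℝ) (hη0 : 0 < η) (hη1 : η ≤ 1)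
    (hGO : ∀ i : ℕ, 1 ≤ i → i ≤ K - 1 →
      f (G.take i ++ O.drop i) ≥
        (1 - η * (1 - (i : ℝ) / (K : ℝ))) * f (G.take i) +
          (1 - (i : ℝ) / (K : ℝ)) * f O) :
    f G ≥ (1 / η) * (1 - (1 - η / (K : ℝ)) ^ K) * f O := by
  obtain ⟨hf0, hmono, hdim⟩ := hf
  have hKpos : (0:ℝ) < (K:ℝ) := by exact_mod_cast hK
  have hfO : 0 ≤ f O := by
    have := hO [] (by simp)
    simpa [hf0] using this
  have hq0 : 0 ≤ 1 - η / (K:ℝ) := by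
    have : η / (K:ℝ) ≤ 1 := by
      rw [div_le_one hKpos]
      calc η ≤ 1 := hη1
        _ ≤ (K:ℝ) := by exact_mod_cast hK
    linarith
  -- telescoping lemma
  have tel : ∀ i < K, ∀ L : List α, i + L.length ≤ K →
      f (G.take i ++ L) ≤ f (G.take i) +
        (L.length : ℝ) * (f (G.take (i+1)) - f (G.take i)) := by
    intro i hi L
    induction L using List.reverseRecOn with
    | nil => simp
    | append_singleton L a ih =>
      intro hlen
      have hLlen : (L ++ [a]).length = L.length + 1 := by simp
      have hlen' : i + L.length ≤ K := by omega
      have h1 := ih (by omega)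
      have htakelen : (G.take i).length = i := by
        rw [List.length_take, hGlen]; omega
      have h2 := hdim (G.take i) (G.take i ++ L) (List.prefix_append _ _)
        (by simp [htakelen]; omega) a
      have h3 : f (G.take i ++ [a]) ≤ f (G.take (i+1)) := by
        have := hG i (by omega) a
        exact this
      have heq : G.take i ++ (L ++ [a]) = (G.take i ++ L) ++ [a] := by
        rw [List.append_assoc]
      rw [heq, hLlen]
      push_cast
      nlinarith [h1, h2, h3]
  -- recurrence
  have hrec : ∀ i < K, f (G.take (i+1)) ≥
      (1 - η / (K:ℝ)) * f (G.take i) + f O / (K:ℝ) := by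
    intro i hi
    have hdlen : (O.drop i).length = K - i := by
      rw [List.length_drop, hOlen]
    have htel := tel i hi (O.drop i) (by omega)
    rw [hdlen] at htel
    have hcast : ((K - i : ℕ) : ℝ) = (K:ℝ) - (i:ℝ) := by
      have : i ≤ K := le_of_lt hi
      push_cast [this]; ring
    rw [hcast] at htel
    have hcpos : (0:ℝ) < (K:ℝ) - (i:ℝ) := by
      have : (i:ℝ) < (K:ℝ) := by exact_mod_cast hi
      linarith
    rcases Nat.eq_zero_or_pos i with h0 | h1
    · subst h0
      simp only [List.take_zero, List.drop_zero, List.nil_append, hf0] at htel ⊢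
      have : f O ≤ (K:ℝ) * f (G.take 1) := by
        push_cast at htel; linarith
      rw [ge_iff_le, mul_zero, zero_add, div_le_iff₀ hKpos]
      nlinarith [this]
    · have hgo := hGO i h1 (by omega)
      -- combine: (1 - η(1-i/K)) fGi + (1-i/K) fO ≤ fGi + (K-i) δ
      have hiK : (1 : ℝ) - (i:ℝ)/(K:ℝ) = ((K:ℝ) - (i:ℝ))/(K:ℝ) := by
        field_simp
      rw [hiK] at hgo
      have key : ((K:ℝ) - (i:ℝ))/(K:ℝ) * (f O - η * f (G.take i)) ≤
          ((K:ℝ) - (i:ℝ)) * (f (G.take (i+1)) - f (G.take i)) := by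
        ring_nf at hgo htel ⊢
        linarith [hgo, htel]
      rw [ge_iff_le]
      have hKne : (K:ℝ) ≠ 0 := ne_of_gt hKpos
      have key' : ((K:ℝ) - (i:ℝ)) * ((f O - η * f (G.take i))/(K:ℝ)) ≤
          ((K:ℝ) - (i:ℝ)) * (f (G.take (i+1)) - f (G.take i)) := by
        have heq : ((K:ℝ) - (i:ℝ))/(K:ℝ) * (f O - η * f (G.take i)) =
            ((K:ℝ) - (i:ℝ)) * ((f O - η * f (G.take i))/(K:ℝ)) := by ring
        linarith [key, heq.ge, heq.le]
      have h2 : (f O - η * f (G.take i))/(K:ℝ) ≤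
          f (G.take (i+1)) - f (G.take i) :=
        le_of_mul_le_mul_left key' hcpos
      have : (1 - η/(K:ℝ)) * f (G.take i) + f O/(K:ℝ) =
          f (G.take i) + (f O - η * f (G.take i))/(K:ℝ) := by
        field_simp; ring
      rw [this]; linarith
  -- induction
  have main : ∀ i, i ≤ K →
      (1/η) * (1 - (1 - η/(K:ℝ))^i) * f O ≤ f (G.take i) := by
    intro i
    induction i with
    | zero => intro _; simp [hf0]
    | succ n ih =>
      intro h
      have hn := ih (by omega)
      have hr := hrec n (by omega)
      have key : (1/η) * (1 - (1 - η/(K:ℝ))^(n+1)) * f O =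
          (1 - η/(K:ℝ)) * ((1/η) * (1 - (1 - η/(K:ℝ))^n) * f O) + f O/(K:ℝ) := by
        have hηne : η ≠ 0 := ne_of_gt hη0
        have hKne : (K:ℝ) ≠ 0 := ne_of_gt hKpos
        have hq : (1:ℝ) - (1 - η/(K:ℝ)) = η/(K:ℝ) := by ring
        generalize (1 - η/(K:ℝ)) = q at hq ⊢
        have hfK : f O/(K:ℝ) = (1/η) * (1 - q) * f O := by
          rw [hq]; field_simp
        rw [hfK]
        ring
      rw [key]
      have := mul_le_mul_of_nonneg_left hn hq0
      linarith
  have hGK : G.take K = G := by rw [← hGlen, List.take_length]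
  have := main K le_rfl
  rw [hGK] at this
  exact this
end
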